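/- arXiv:2302.10333 — 9 statements merged into one kernel-verified Lean document; each statement's English description precedes it below -/
import Mathlib

section
/- For distinct (mod π) reals b_1,…,b_m and any reals a_1,…,a_m, the sum over t=1..m of [∏_{j=1}^m sin(a_j - b_t)] / [∏_{j≠t} sin(b_j - b_t)] equals sin(a_1+⋯+a_m − b_1−⋯−b_m). -/
/-!
With `u j = exp (a j * I)` and `v t = exp (b t * I)` every sine becomes `(I / 2) * (v / u - u / v)`.
Pulling out the monomial factors reduces the identity to
`∑ t, ∏ j, (x t - y j) / (x t * ∏ j ≠ t, (x t - x j)) = 1 - ∏ y / ∏ x`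
for `x = v ^ 2`, `y = u ^ 2`, which is the divided-difference formula for the leading coefficient of
the monic polynomial `∏ j, (X - y j)` of degree `m` on the `m + 1` nodes `0, x 1, …, x m`.
-/

open Finset

section

variable {F ι : Type*} [Field F] [DecidableEq ι]

theorem sum_prod_sub_div_eq_one_sub_prod_div_prod {s : Finset ι} {x : ι → F} (w : ι → F)
    (hx : Set.InjOn x s) (hx0 : ∀ i ∈ s, x i ≠ 0) :
    ∑ t ∈ s, (∏ j ∈ s, (x t - w j)) / (x t * ∏ j ∈ s.erase t, (x t - x j))
      = 1 - (∏ j ∈ s, w j) / ∏ j ∈ s, x j := by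
  set v : Option ι → F := fun o => o.elim 0 x
  have hv : Set.InjOn v (insertNone s) := by
    rintro (_ | i) hi (_ | j) hj hij
    · rfl
    · exact absurd hij.symm (hx0 j (by simpa using hj))
    · exact absurd hij (hx0 i (by simpa using hi))
    · exact congrArg some (hx (by simpa using hi) (by simpa using hj) hij)
  have hdeg : (Lagrange.nodal s w).degree < #(insertNone s) := by
    rw [Lagrange.degree_nodal, card_insertNone]
    exact_mod_cast Nat.lt_succ_self _
  have hcoeff := Lagrange.coeff_eq_sum hv hdeg
  have herase_none : (insertNone s).erase none = s.map Function.Embedding.some := by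
    ext (_ | i) <;> simp
  have herase_some : ∀ t, (insertNone s).erase (some t) = insertNone (s.erase t) := by
    intro t; ext (_ | i) <;> simp
  rw [card_insertNone, add_tsub_cancel_right, ← Lagrange.natDegree_nodal (v := w),
    Lagrange.nodal_monic.coeff_natDegree, sum_insertNone, herase_none, prod_map] at hcoeff
  simp only [herase_some, prod_insertNone, Lagrange.eval_nodal, v, Option.elim, sub_zero,
    Function.Embedding.some_apply, zero_sub] at hcoeff
  rw [prod_neg, prod_neg,
    mul_div_mul_left _ _ (pow_ne_zero _ (neg_ne_zero.mpr one_ne_zero))] at hcoeff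
  linear_combination -hcoeff

def sinOfExp (κ u v : F) : F := κ * (v / u - u / v)

theorem sinOfExp_eq_div_mul {κ u v : F} (hu : u ≠ 0) (hv : v ≠ 0) :
    sinOfExp κ u v = κ / (u * v) * (v ^ 2 - u ^ 2) := by
  unfold sinOfExp
  field_simp

theorem prod_sinOfExp_div_prod_erase {κ : F} (hκ : κ ≠ 0) {s : Finset ι} {u v : ι → F}
    (hu : ∀ j ∈ s, u j ≠ 0) (hv : ∀ j ∈ s, v j ≠ 0) {t : ι} (ht : t ∈ s) :
    (∏ j ∈ s, sinOfExp κ (u j) (v t)) / ∏ j ∈ s.erase t, sinOfExp κ (v j) (v t)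
      = κ * (∏ j ∈ s, v j) / (∏ j ∈ s, u j) *
        ((∏ j ∈ s, (v t ^ 2 - u j ^ 2)) / (v t ^ 2 * ∏ j ∈ s.erase t, (v t ^ 2 - v j ^ 2))) := by
  have hvt := hv t ht
  rw [prod_congr rfl fun j hj => sinOfExp_eq_div_mul (hu j hj) hvt,
    prod_congr rfl fun j hj => sinOfExp_eq_div_mul (hv j (mem_of_mem_erase hj)) hvt,
    prod_mul_distrib, prod_mul_distrib, mul_div_mul_comm]
  have hfull : κ / (v t * v t) * ∏ j ∈ s.erase t, κ / (v j * v t) = ∏ j ∈ s, κ / (v j * v t) :=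
    mul_prod_erase s (fun j => κ / (v j * v t)) ht
  have hratio : (∏ j ∈ s, κ / (u j * v t)) / ∏ j ∈ s, κ / (v j * v t)
      = (∏ j ∈ s, v j) / ∏ j ∈ s, u j := by
    rw [← prod_div_distrib, ← prod_div_distrib]
    refine prod_congr rfl fun j hj => ?_
    field_simp [hu j hj, hv j hj]
  have hc : κ / (v t * v t) ≠ 0 := div_ne_zero hκ (mul_ne_zero hvt hvt)
  have hAB : (∏ j ∈ s, κ / (u j * v t)) / ∏ j ∈ s.erase t, κ / (v j * v t)
      = κ * (∏ j ∈ s, v j) / (∏ j ∈ s, u j) / v t ^ 2 := by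
    rw [← div_mul_cancel₀ (_ / _) hc, div_div, mul_comm (∏ j ∈ s.erase t, _), hfull, hratio]
    ring
  rw [hAB, div_mul_div_comm, mul_div_assoc]

theorem sum_prod_sinOfExp_div_prod_erase {κ : F} (hκ : κ ≠ 0) {s : Finset ι} {u v : ι → F}
    (hu : ∀ j ∈ s, u j ≠ 0) (hv : ∀ j ∈ s, v j ≠ 0) (hv2 : Set.InjOn (fun j => v j ^ 2) s) :
    ∑ t ∈ s, (∏ j ∈ s, sinOfExp κ (u j) (v t)) / ∏ j ∈ s.erase t, sinOfExp κ (v j) (v t)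
      = sinOfExp κ (∏ j ∈ s, u j) (∏ j ∈ s, v j) := by
  have hU : ∏ j ∈ s, u j ≠ 0 := prod_ne_zero_iff.mpr hu
  have hV : ∏ j ∈ s, v j ≠ 0 := prod_ne_zero_iff.mpr hv
  rw [sum_congr rfl fun t ht => prod_sinOfExp_div_prod_erase hκ hu hv ht, ← mul_sum,
    sum_prod_sub_div_eq_one_sub_prod_div_prod _ hv2 fun j hj => pow_ne_zero 2 (hv j hj),
    prod_pow, prod_pow, sinOfExp]
  field_simp

open Complex in
theorem Complex.sin_sub_eq_sinOfExp (z w : ℂ) :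
    sin (z - w) = sinOfExp (I / 2) (exp (z * I)) (exp (w * I)) := by
  rw [sinOfExp, sin, ← exp_sub, ← exp_sub]
  ring_nf

end

theorem hermite_sine_identity (m : ℕ) (a b : Fin m → ℝ)
    (hb : ∀ j t, j ≠ t → Real.sin (b j - b t) ≠ 0) :
    ∑ t, (∏ j, Real.sin (a j - b t)) / (∏ j ∈ univ.erase t, Real.sin (b j - b t))
      = Real.sin (∑ j, a j - ∑ j, b j) := by
  open Complex in
  have hsq_inj : Set.InjOn (fun t => exp (b t * I) ^ 2) (univ : Finset (Fin m)) := by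
    intro j _ t _ hjt
    by_contra hne
    apply hb j t hne
    apply ofReal_injective
    push_cast
    rw [sin_sub_eq_sinOfExp, sinOfExp_eq_div_mul (exp_ne_zero _) (exp_ne_zero _)]
    simp [hjt]
  apply Complex.ofReal_injective
  push_cast
  simp only [Complex.sin_sub_eq_sinOfExp, sum_mul, Complex.exp_sum]
  exact sum_prod_sinOfExp_div_prod_erase (by simp) (fun j _ => Complex.exp_ne_zero _)
    (fun j _ => Complex.exp_ne_zero _) hsq_inj
end

section
/- Let r = n, b_1,…,b_n distinct mod π, ν = Σ a_j − Σ b_j, and z avoiding poles. Then ∏_{j=1}^{n} sin(a_j−z) / ∏_{j=1}^{n} sin(b_j−z) = e^{−iν} + Σ_{j=1}^{n} [∏_{k=1}^{n} sin(a_k−b_j)] e^{i(b_j−z)} / [∏_{m≠j} sin(b_m−b_j) · sin(b_j−z)]. -/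
/-!
Put `x = exp (2 i z)`, `A_k = exp (2 i a_k)`, `B_j = exp (2 i b_j)`. Up to the factor
`(i / 2) exp (-i (u + w))`, `sin (u - w)` is `exp (2 i w) - exp (2 i u)`, so the left side is
`exp (-i ν)` times the rational function `∏ (x - A_k) / ∏ (x - B_k)`, whose partial fraction
expansion at the simple poles `B_j` comes from Lagrange interpolation of the degree `< n`
polynomial `∏ (X - A_k) - ∏ (X - B_k)`. Translated back into sines, the residue at `B_j` carries
the factor `exp (-i ν) exp (-i (b_j - z))`, whence the factor `exp (i (b_j - z))` in each term.
-/

open Finset Polynomial Complex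

namespace Lagrange

theorem prod_sub_div_prod_sub_eq_one_add_sum {F ι : Type*} [Field F] [DecidableEq ι]
    {s : Finset ι} (α : ι → F) {β : ι → F} (hβ : Set.InjOn β s) {x : F}
    (hx : ∀ i ∈ s, x ≠ β i) :
    (∏ i ∈ s, (x - α i)) / ∏ i ∈ s, (x - β i) =
      1 + ∑ i ∈ s, (∏ k ∈ s, (β i - α k)) / ((∏ l ∈ s.erase i, (β i - β l)) * (x - β i)) := by
  have hdeg : (nodal s α - nodal s β).degree < #s := by
    rw [← degree_nodal (v := α)]
    exact degree_sub_lt_left (by rw [degree_nodal, degree_nodal]) nodal_ne_zero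
      (by rw [nodal_monic.leadingCoeff, nodal_monic.leadingCoeff])
  have hinterp := eq_interpolate_of_eval_eq (fun i => (nodal s α).eval (β i)) hβ hdeg
    fun i hi => by rw [eval_sub, eval_nodal_at_node hi, sub_zero]
  have hQ := eval_nodal_not_at_node hx
  have heval := congrArg (eval x) hinterp
  rw [eval_sub, eval_interpolate_not_at_node _ hx, sub_eq_iff_eq_add'] at heval
  rw [← eval_nodal, ← eval_nodal, heval, add_div, mul_div_cancel_left₀ _ hQ, div_self hQ]
  refine congrArg _ (sum_congr rfl fun i _ => ?_)
  rw [nodalWeight, prod_inv_distrib, eval_nodal, div_eq_mul_inv, mul_inv]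
  ring

end Lagrange

namespace Complex

noncomputable def sinScale (u w : ℂ) : ℂ := I / 2 * cexp (-(I * (u + w)))

theorem sin_sub_eq_sinScale_mul (u w : ℂ) :
    sin (u - w) = sinScale u w * (cexp (2 * I * w) - cexp (2 * I * u)) := by
  have h₁ : cexp (-(I * (u + w))) * cexp (2 * I * w) = cexp (-(u - w) * I) := by
    rw [← exp_add]; ring_nf
  have h₂ : cexp (-(I * (u + w))) * cexp (2 * I * u) = cexp ((u - w) * I) := by
    rw [← exp_add]; ring_nf
  rw [sinScale, sin, mul_sub, mul_assoc (I / 2), mul_assoc (I / 2), h₁, h₂]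
  ring

theorem sinScale_ne_zero (u w : ℂ) : sinScale u w ≠ 0 :=
  mul_ne_zero (div_ne_zero I_ne_zero two_ne_zero) (exp_ne_zero _)

theorem sinScale_eq_mul_exp (u w w' : ℂ) :
    sinScale u w = sinScale u w' * cexp (I * (w' - w)) := by
  rw [sinScale, sinScale, mul_assoc, ← exp_add]
  ring_nf

theorem prod_sinScale_div_prod_sinScale {ι : Type*} [Fintype ι] (a b : ι → ℂ) (w : ℂ) :
    (∏ k, sinScale (a k) w) / ∏ k, sinScale (b k) w = cexp (-(I * (∑ k, a k - ∑ k, b k))) := by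
  rw [← prod_div_distrib, ← sum_sub_distrib, mul_sum, ← sum_neg_distrib, exp_sum]
  refine prod_congr rfl fun k _ => ?_
  rw [sinScale, sinScale, mul_div_mul_left _ _ (div_ne_zero I_ne_zero two_ne_zero),
    ← exp_sub]
  ring_nf

theorem prod_sin_sub {ι : Type*} (s : Finset ι) (u : ι → ℂ) (w : ℂ) :
    ∏ k ∈ s, sin (u k - w) =
      (∏ k ∈ s, sinScale (u k) w) * ∏ k ∈ s, (cexp (2 * I * w) - cexp (2 * I * u k)) := by
  simp_rw [sin_sub_eq_sinScale_mul, prod_mul_distrib]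

theorem prod_sin_mul_exp_div_prod_sin_eq {ι : Type*} [Fintype ι] [DecidableEq ι]
    (a b : ι → ℂ) (z : ℂ) (j : ι) :
    (∏ k, sin (a k - b j)) * cexp (I * (b j - z)) /
        ((∏ l ∈ univ.erase j, sin (b l - b j)) * sin (b j - z)) =
      cexp (-(I * (∑ k, a k - ∑ k, b k))) *
        ((∏ k, (cexp (2 * I * b j) - cexp (2 * I * a k))) /
          ((∏ l ∈ univ.erase j, (cexp (2 * I * b j) - cexp (2 * I * b l))) *
            (cexp (2 * I * z) - cexp (2 * I * b j)))) := by
  rw [prod_sin_sub, prod_sin_sub, sin_sub_eq_sinScale_mul (b j) z,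
    sinScale_eq_mul_exp _ z (b j), ← prod_sinScale_div_prod_sinScale a b (b j),
    ← mul_prod_erase univ (fun l => sinScale (b l) (b j)) (mem_univ j)]
  have hexp := exp_ne_zero (I * (b j - z))
  have hjj := sinScale_ne_zero (b j) (b j)
  have herase : ∏ l ∈ univ.erase j, sinScale (b l) (b j) ≠ 0 :=
    prod_ne_zero_iff.mpr fun l _ => sinScale_ne_zero _ _
  field_simp

theorem prod_sin_sub_div_prod_sin_sub {ι : Type*} [Fintype ι] [DecidableEq ι] (a b : ι → ℂ)
    (hb : ∀ j k, j ≠ k → sin (b j - b k) ≠ 0) (z : ℂ) (hz : ∀ j, sin (b j - z) ≠ 0) :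
    (∏ j, sin (a j - z)) / ∏ j, sin (b j - z) =
      cexp (-(I * (∑ k, a k - ∑ k, b k))) +
        ∑ j, (∏ k, sin (a k - b j)) * cexp (I * (b j - z)) /
          ((∏ l ∈ univ.erase j, sin (b l - b j)) * sin (b j - z)) := by
  have hinj : Set.InjOn (fun j => cexp (2 * I * b j)) (univ : Finset ι) := by
    intro j _ k _ (hjk : cexp (2 * I * b j) = cexp (2 * I * b k))
    by_contra hne
    exact hb j k hne (by rw [sin_sub_eq_sinScale_mul, ← hjk, sub_self, mul_zero])
  have hpole : ∀ j ∈ univ, cexp (2 * I * z) ≠ cexp (2 * I * b j) := fun j _ hzj =>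
    hz j (by rw [sin_sub_eq_sinScale_mul, hzj, sub_self, mul_zero])
  rw [prod_sin_sub, prod_sin_sub, mul_div_mul_comm, prod_sinScale_div_prod_sinScale,
    Lagrange.prod_sub_div_prod_sub_eq_one_add_sum _ hinj hpole, mul_add, mul_one, mul_sum]
  simp_rw [prod_sin_mul_exp_div_prod_sin_eq]

end Complex

theorem kappa_zero_expansion (n : ℕ) (a b : Fin n → ℝ)
    (hb : ∀ j k, j ≠ k → Real.sin (b j - b k) ≠ 0)
    (ν : ℝ) (hν : ν = ∑ j, a j - ∑ j, b j)
    (z : ℂ) (hz : ∀ j, Complex.sin ((b j : ℂ) - z) ≠ 0) :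
    (∏ j, Complex.sin ((a j : ℂ) - z)) / (∏ j, Complex.sin ((b j : ℂ) - z))
      = Complex.exp (-(Complex.I * ν)) +
        ∑ j, ((∏ k, Complex.sin ((a k : ℂ) - (b j : ℂ))) *
            Complex.exp (Complex.I * ((b j : ℂ) - z))) /
          ((∏ l ∈ univ.erase j, Complex.sin ((b l : ℂ) - (b j : ℂ))) *
            Complex.sin ((b j : ℂ) - z)) := by
  have hbℂ : ∀ j k, j ≠ k → Complex.sin ((b j : ℂ) - b k) ≠ 0 := fun j k hjk => by
    rw [← ofReal_sub, ← ofReal_sin]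
    exact_mod_cast hb j k hjk
  rw [prod_sin_sub_div_prod_sin_sub _ _ hbℂ z hz, hν, ofReal_sub, ofReal_sum, ofReal_sum]
end

section
/- Let r = n+1, b_1,…,b_n distinct mod π, ν = Σ_{j=1}^{n+1} a_j − Σ_{j=1}^{n} b_j. Then Σ_{t=1}^{n} e^{−i b_t} [∏_{k=1}^{n+1} sin(a_k−b_t)] / [∏_{j≠t} sin(b_j−b_t)] = (1/4) e^{iν}( Σ_{j=1}^{n+1} e^{−2i a_j} − Σ_{j=1}^{n} e^{−2i b_j} ) − (1/4) e^{−iν}. -/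
open Finset
open Polynomial


lemma coeff_eq_sum_eval {F : Type*} [Field F] {ι : Type*} [DecidableEq ι]
    (s : Finset ι) (v : ι → F) (hvs : Set.InjOn v s) (f : F[X])
    (hd : f.degree < #s) :
    f.coeff (#s - 1) = ∑ i ∈ s, f.eval (v i) * (∏ j ∈ s.erase i, (v i - v j))⁻¹ := by
  conv_lhs => rw [Lagrange.eq_interpolate hvs hd]
  rw [Lagrange.interpolate_apply, Polynomial.finset_sum_coeff]
  refine sum_congr rfl fun i hi => ?_
  rw [Polynomial.coeff_C_mul]
  congr 1
  have h1 : (Lagrange.basis s v i).coeff (#s - 1) = (Lagrange.basis s v i).leadingCoeff := by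
    rw [Polynomial.leadingCoeff, Lagrange.natDegree_basis hvs hi]
  rw [h1, Lagrange.basis, Polynomial.leadingCoeff_prod, ← Finset.prod_inv_distrib]
  refine prod_congr rfl fun j hj => ?_
  rw [Lagrange.basisDivisor, Polynomial.leadingCoeff_mul, Polynomial.leadingCoeff_C,
    (Polynomial.monic_X_sub_C (v j)).leadingCoeff, mul_one]

lemma rat_id {F : Type*} [Field F] (n : ℕ) (x : Fin (n+1) → F) (y : Fin n → F)
    (hy0 : ∀ t, y t ≠ 0) (hyy : ∀ j t : Fin n, j ≠ t → y j ≠ y t) :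
    ∑ t, (∏ k, (y t - x k)) / (y t * ∏ j ∈ univ.erase t, (y t - y j))
      = -∑ k, x k + ∑ t, y t + (∏ k, x k) / (∏ t, y t) := by
  classical
  set z : Fin (n+1) → F := Fin.cases 0 y with hz
  have hz0 : z 0 = 0 := rfl
  have hzs : ∀ t : Fin n, z t.succ = y t := fun t => rfl
  have hinj : Set.InjOn z (univ : Finset (Fin (n+1))) := by
    intro i _ j _ hij
    induction i using Fin.cases with
    | zero => induction j using Fin.cases with
      | zero => rfl
      | succ j => exact absurd (hij.symm.trans hz0) (hy0 j)
    | succ i => induction j using Fin.cases with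
      | zero => exact absurd (hij.trans hz0) (hy0 i)
      | succ j => by_contra hne
                  exact hyy _ _ (fun h => hne (congrArg Fin.succ h)) hij
  set P : F[X] := ∏ k, (X - C (x k)) with hP
  set Q : F[X] := ∏ i, (X - C (z i)) with hQ
  have hPm : P.Monic := monic_prod_of_monic _ _ fun _ _ => monic_X_sub_C _
  have hQm : Q.Monic := monic_prod_of_monic _ _ fun _ _ => monic_X_sub_C _
  have hcard : #(univ : Finset (Fin (n+1))) = n + 1 := by simp
  have hPd : P.natDegree = n + 1 := by
    rw [hP, natDegree_prod_of_monic _ _ fun _ _ => monic_X_sub_C _]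
    simp [natDegree_X_sub_C]
  have hQd : Q.natDegree = n + 1 := by
    rw [hQ, natDegree_prod_of_monic _ _ fun _ _ => monic_X_sub_C _]
    simp [natDegree_X_sub_C]
  have hdeg : (P - Q).degree < (#(univ : Finset (Fin (n+1))) : WithBot ℕ) := by
    rw [hcard]
    have h1 : P.degree = Q.degree := by
      rw [degree_eq_natDegree hPm.ne_zero, degree_eq_natDegree hQm.ne_zero, hPd, hQd]
    have := degree_sub_lt h1 hPm.ne_zero (by rw [hPm.leadingCoeff, hQm.leadingCoeff])
    rwa [degree_eq_natDegree hPm.ne_zero, hPd] at this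
  have hcoeff : (P - Q).coeff n = -∑ k, x k + ∑ t, y t := by
    have hcP : P.coeff n = -∑ k, x k := by
      have := prod_X_sub_C_coeff_card_pred (univ : Finset (Fin (n+1))) x (by simp)
      rwa [hcard, Nat.add_sub_cancel] at this
    have hcQ : Q.coeff n = -∑ t, y t := by
      have := prod_X_sub_C_coeff_card_pred (univ : Finset (Fin (n+1))) z (by simp)
      rw [hcard, Nat.add_sub_cancel] at this
      rw [hQ, this, Fin.sum_univ_succ, hz0, zero_add]
      simp only [hzs]
    rw [coeff_sub, hcP, hcQ]; ring
  have hevalQ : ∀ i : Fin (n+1), Q.eval (z i) = 0 := by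
    intro i
    rw [hQ, eval_prod]
    exact prod_eq_zero (mem_univ i) (by simp)
  have hevalP : ∀ c : F, P.eval c = ∏ k, (c - x k) := by
    intro c; rw [hP, eval_prod]; simp
  have key := coeff_eq_sum_eval (univ : Finset (Fin (n+1))) z hinj (P - Q) hdeg
  rw [hcard, Nat.add_sub_cancel, hcoeff] at key
  have him0 : (univ : Finset (Fin (n+1))).erase 0 = univ.image Fin.succ := by
    ext i; simp [Fin.exists_succ_eq, eq_comm]
  have himt : ∀ t : Fin n, (univ : Finset (Fin (n+1))).erase t.succ
      = insert 0 ((univ.erase t).image Fin.succ) := by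
    intro t; ext i
    induction i using Fin.cases with
    | zero => simp [(Fin.succ_ne_zero t).symm]
    | succ j => simp [Fin.succ_ne_zero, Fin.succ_inj, eq_comm]
  have hpow : ((-1:F)^(n+1)) * ((-1:F)^n) = -1 := by
    rw [← pow_add, show n+1+n = 2*n+1 by ring, pow_succ, pow_mul, neg_one_sq, one_pow, one_mul]
  have hinv : ((-1:F)^n)⁻¹ = (-1:F)^n := by
    rw [← inv_pow, inv_neg, inv_one]
  have hterm0 : (P - Q).eval (z 0) * (∏ j ∈ (univ : Finset (Fin (n+1))).erase 0, (z 0 - z j))⁻¹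
      = -((∏ k, x k) / (∏ t, y t)) := by
    rw [eval_sub, hevalQ, hevalP, sub_zero, hz0, him0,
      prod_image (fun i _ j _ h => Fin.succ_injective n h)]
    simp only [hzs]
    have e1 : ∏ k, ((0:F) - x k) = (-1:F)^(n+1) * ∏ k, x k := by
      calc ∏ k, ((0:F) - x k) = ∏ k, ((-1) * x k) := prod_congr rfl fun k _ => by ring
        _ = (-1:F)^(n+1) * ∏ k, x k := by
            rw [prod_mul_distrib, prod_const, card_univ, Fintype.card_fin]
    have e2 : ∏ t, ((0:F) - y t) = (-1:F)^n * ∏ t, y t := by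
      calc ∏ t, ((0:F) - y t) = ∏ t, ((-1) * y t) := prod_congr rfl fun t _ => by ring
        _ = (-1:F)^n * ∏ t, y t := by
            rw [prod_mul_distrib, prod_const, card_univ, Fintype.card_fin]
    rw [e1, e2, mul_inv, division_def, hinv]
    linear_combination ((∏ k, x k) * (∏ t, y t)⁻¹) * hpow
  have htermS : ∀ t : Fin n,
      (P - Q).eval (z t.succ) * (∏ j ∈ (univ : Finset (Fin (n+1))).erase t.succ, (z t.succ - z j))⁻¹
      = (∏ k, (y t - x k)) / (y t * ∏ j ∈ univ.erase t, (y t - y j)) := by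
    intro t
    have h0 : (0 : Fin (n+1)) ∉ (univ.erase t).image Fin.succ := by
      simp only [mem_image]
      rintro ⟨i, _, hi⟩
      exact Fin.succ_ne_zero i hi
    rw [eval_sub, hevalQ, sub_zero, hzs, hevalP, himt t, prod_insert h0,
      prod_image (fun i _ j _ h => Fin.succ_injective n h), hz0, sub_zero, division_def]
    simp only [hzs]
  have key2 : ∑ i : Fin (n+1), (P - Q).eval (z i) * (∏ j ∈ univ.erase i, (z i - z j))⁻¹
      = -((∏ k, x k) / (∏ t, y t))
        + ∑ t, (∏ k, (y t - x k)) / (y t * ∏ j ∈ univ.erase t, (y t - y j)) := by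
    rw [Fin.sum_univ_succ, hterm0]
    exact congrArg _ (sum_congr rfl fun t _ => htermS t)
  have h := key.trans key2
  linear_combination -h

lemma sin_fac (u w : ℂ) :
    Complex.sin (u - w) * (2*Complex.I*Complex.exp (-(2*Complex.I*w)))
      = Complex.exp (Complex.I*(u-w)) *
        (Complex.exp (-(2*Complex.I*w)) - Complex.exp (-(2*Complex.I*u))) := by
  have m1 : Complex.exp (-(u-w)*Complex.I) * Complex.exp (-(2*Complex.I*w))
      = Complex.exp (Complex.I*(u-w)) * Complex.exp (-(2*Complex.I*u)) := by
    rw [← Complex.exp_add, ← Complex.exp_add]; congr 1; ring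
  have m2 : Complex.exp ((u-w)*Complex.I) = Complex.exp (Complex.I*(u-w)) := by
    congr 1; ring
  rw [Complex.sin, m2]
  linear_combination (-1 : ℂ) * m1 +
    ((Complex.exp (-(u-w)*Complex.I) - Complex.exp (Complex.I*(u-w))) *
      Complex.exp (-(2*Complex.I*w))) * Complex.I_sq

lemma per_term (m : ℕ) (α : Fin (m+2) → ℂ) (β : Fin (m+1) → ℂ) (t : Fin (m+1))
    (hs : ∀ j, j ≠ t → Complex.sin (β j - β t) ≠ 0) :
    Complex.exp (-(Complex.I * β t)) * (∏ k, Complex.sin (α k - β t)) /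
        (∏ j ∈ univ.erase t, Complex.sin (β j - β t))
      = (-(1/4) * Complex.exp (Complex.I * (∑ k, α k - ∑ j, β j))) *
          ((∏ k, (Complex.exp (-(2*Complex.I*β t)) - Complex.exp (-(2*Complex.I*α k)))) /
           (Complex.exp (-(2*Complex.I*β t)) *
            ∏ j ∈ univ.erase t, (Complex.exp (-(2*Complex.I*β t)) - Complex.exp (-(2*Complex.I*β j))))) := by
  set w := Complex.exp (-(Complex.I * β t)) with hwdef
  have hw : w ≠ 0 := Complex.exp_ne_zero _
  have hy : Complex.exp (-(2*Complex.I*β t)) = w * w := by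
    rw [hwdef, ← Complex.exp_add]; congr 1; ring
  have hy0 : Complex.exp (-(2*Complex.I*β t)) ≠ 0 := Complex.exp_ne_zero _
  have hI : (Complex.I:ℂ) ≠ 0 := Complex.I_ne_zero
  have hc0 : (2*Complex.I*Complex.exp (-(2*Complex.I*β t))) ≠ 0 :=
    mul_ne_zero (mul_ne_zero two_ne_zero hI) hy0
  have hm : #((univ : Finset (Fin (m+1))).erase t) = m := by
    rw [card_erase_of_mem (mem_univ t), card_univ, Fintype.card_fin]
    omega
  have hyd : ∀ j ∈ univ.erase t,
      Complex.exp (-(2*Complex.I*β t)) - Complex.exp (-(2*Complex.I*β j)) ≠ 0 := by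
    intro j hj hzero
    have h := sin_fac (β j) (β t)
    rw [hzero, mul_zero] at h
    rcases mul_eq_zero.mp h with h1 | h2
    · exact hs j (mem_erase.mp hj).1 h1
    · exact hc0 h2
  have hS2ne : (∏ j ∈ univ.erase t, Complex.sin (β j - β t)) ≠ 0 :=
    prod_ne_zero_iff.mpr fun j hj => hs j (mem_erase.mp hj).1
  have hDne : Complex.exp (-(2*Complex.I*β t)) *
      ∏ j ∈ univ.erase t, (Complex.exp (-(2*Complex.I*β t)) - Complex.exp (-(2*Complex.I*β j))) ≠ 0 :=
    mul_ne_zero hy0 (prod_ne_zero_iff.mpr hyd)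
  have hB : Complex.exp (Complex.I * ∑ j, β j) ≠ 0 := Complex.exp_ne_zero _
  -- product identity for numerator
  have hE1 : (∏ k, Complex.exp (Complex.I*(α k - β t)))
      = Complex.exp (Complex.I * ∑ k, α k) * w^(m+2) := by
    rw [← Complex.exp_sum]
    have harg : ∑ k : Fin (m+2), Complex.I*(α k - β t)
        = Complex.I * ∑ k, α k + (m+2 : ℕ) * (-(Complex.I * β t)) := by
      calc ∑ k : Fin (m+2), Complex.I*(α k - β t)
          = ∑ k : Fin (m+2), (Complex.I * α k + (-(Complex.I * β t))) :=
            sum_congr rfl fun k _ => by ring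
        _ = Complex.I * ∑ k, α k + (m+2 : ℕ) * (-(Complex.I * β t)) := by
            rw [sum_add_distrib, ← mul_sum, sum_const, card_univ, Fintype.card_fin, nsmul_eq_mul]
    rw [harg, Complex.exp_add, Complex.exp_nat_mul, hwdef]
  have hS1 : (∏ k, Complex.sin (α k - β t)) * (2*Complex.I*Complex.exp (-(2*Complex.I*β t)))^(m+2)
      = (Complex.exp (Complex.I * ∑ k, α k) * w^(m+2)) *
        ∏ k, (Complex.exp (-(2*Complex.I*β t)) - Complex.exp (-(2*Complex.I*α k))) := by
    calc (∏ k, Complex.sin (α k - β t)) * (2*Complex.I*Complex.exp (-(2*Complex.I*β t)))^(m+2)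
        = ∏ k : Fin (m+2), (Complex.sin (α k - β t) * (2*Complex.I*Complex.exp (-(2*Complex.I*β t)))) := by
          rw [prod_mul_distrib, prod_const, card_univ, Fintype.card_fin]
      _ = ∏ k : Fin (m+2), (Complex.exp (Complex.I*(α k - β t)) *
            (Complex.exp (-(2*Complex.I*β t)) - Complex.exp (-(2*Complex.I*α k)))) :=
          prod_congr rfl fun k _ => sin_fac (α k) (β t)
      _ = (∏ k, Complex.exp (Complex.I*(α k - β t))) *
            ∏ k, (Complex.exp (-(2*Complex.I*β t)) - Complex.exp (-(2*Complex.I*α k))) :=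
          prod_mul_distrib
      _ = _ := by rw [hE1]
  -- product identity for denominator
  have hsum_erase : ∑ j ∈ univ.erase t, β j = (∑ j, β j) - β t := by
    rw [← Finset.sum_erase_add univ β (mem_univ t)]; ring
  have hE2 : (∏ j ∈ univ.erase t, Complex.exp (Complex.I*(β j - β t)))
      = Complex.exp (Complex.I * ∑ j, β j) * w^(m+1) := by
    rw [← Complex.exp_sum]
    have harg : ∑ j ∈ univ.erase t, Complex.I*(β j - β t)
        = Complex.I * ∑ j, β j + (m+1 : ℕ) * (-(Complex.I * β t)) := by
      calc ∑ j ∈ univ.erase t, Complex.I*(β j - β t)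
          = ∑ j ∈ univ.erase t, (Complex.I * β j + (-(Complex.I * β t))) :=
            sum_congr rfl fun j _ => by ring
        _ = Complex.I * ∑ j ∈ univ.erase t, β j + (m : ℕ) * (-(Complex.I * β t)) := by
            rw [sum_add_distrib, ← mul_sum, sum_const, hm, nsmul_eq_mul]
        _ = Complex.I * ∑ j, β j + (m+1 : ℕ) * (-(Complex.I * β t)) := by
            rw [hsum_erase]; push_cast; ring
    rw [harg, Complex.exp_add, Complex.exp_nat_mul, hwdef]
  have hS2 : (∏ j ∈ univ.erase t, Complex.sin (β j - β t)) *
        (2*Complex.I*Complex.exp (-(2*Complex.I*β t)))^m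
      = (Complex.exp (Complex.I * ∑ j, β j) * w^(m+1)) *
        ∏ j ∈ univ.erase t, (Complex.exp (-(2*Complex.I*β t)) - Complex.exp (-(2*Complex.I*β j))) := by
    calc (∏ j ∈ univ.erase t, Complex.sin (β j - β t)) *
          (2*Complex.I*Complex.exp (-(2*Complex.I*β t)))^m
        = ∏ j ∈ univ.erase t, (Complex.sin (β j - β t) *
            (2*Complex.I*Complex.exp (-(2*Complex.I*β t)))) := by
          rw [prod_mul_distrib, prod_const, hm]
      _ = ∏ j ∈ univ.erase t, (Complex.exp (Complex.I*(β j - β t)) *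
            (Complex.exp (-(2*Complex.I*β t)) - Complex.exp (-(2*Complex.I*β j)))) :=
          prod_congr rfl fun j _ => sin_fac (β j) (β t)
      _ = (∏ j ∈ univ.erase t, Complex.exp (Complex.I*(β j - β t))) *
            ∏ j ∈ univ.erase t, (Complex.exp (-(2*Complex.I*β t)) - Complex.exp (-(2*Complex.I*β j))) :=
          prod_mul_distrib
      _ = _ := by rw [hE2]
  have hA' : Complex.exp (Complex.I * (∑ k, α k - ∑ j, β j))
      = Complex.exp (Complex.I * ∑ k, α k) * (Complex.exp (Complex.I * ∑ j, β j))⁻¹ := by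
    rw [← Complex.exp_neg, ← Complex.exp_add]; congr 1; ring
  rw [← mul_div_assoc, div_eq_div_iff hS2ne hDne]
  apply mul_left_cancel₀ (a := (2*Complex.I*Complex.exp (-(2*Complex.I*β t)))^(m+2) *
    (2*Complex.I*Complex.exp (-(2*Complex.I*β t)))^m)
    (mul_ne_zero (pow_ne_zero _ hc0) (pow_ne_zero _ hc0))
  calc (2*Complex.I*Complex.exp (-(2*Complex.I*β t)))^(m+2) *
        (2*Complex.I*Complex.exp (-(2*Complex.I*β t)))^m *
        (w * (∏ k, Complex.sin (α k - β t)) *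
          (Complex.exp (-(2*Complex.I*β t)) *
            ∏ j ∈ univ.erase t, (Complex.exp (-(2*Complex.I*β t)) - Complex.exp (-(2*Complex.I*β j)))))
      = (w * (Complex.exp (-(2*Complex.I*β t)) *
            ∏ j ∈ univ.erase t, (Complex.exp (-(2*Complex.I*β t)) - Complex.exp (-(2*Complex.I*β j)))) *
          (2*Complex.I*Complex.exp (-(2*Complex.I*β t)))^m) *
          ((∏ k, Complex.sin (α k - β t)) * (2*Complex.I*Complex.exp (-(2*Complex.I*β t)))^(m+2)) := by
        ring
    _ = (w * (Complex.exp (-(2*Complex.I*β t)) *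
            ∏ j ∈ univ.erase t, (Complex.exp (-(2*Complex.I*β t)) - Complex.exp (-(2*Complex.I*β j)))) *
          (2*Complex.I*Complex.exp (-(2*Complex.I*β t)))^m) *
          ((Complex.exp (Complex.I * ∑ k, α k) * w^(m+2)) *
            ∏ k, (Complex.exp (-(2*Complex.I*β t)) - Complex.exp (-(2*Complex.I*α k)))) := by
        rw [hS1]
    _ = ((-(1/4) * Complex.exp (Complex.I * (∑ k, α k - ∑ j, β j))) *
          (∏ k, (Complex.exp (-(2*Complex.I*β t)) - Complex.exp (-(2*Complex.I*α k)))) *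
          (2*Complex.I*Complex.exp (-(2*Complex.I*β t)))^(m+2)) *
          ((Complex.exp (Complex.I * ∑ j, β j) * w^(m+1)) *
            ∏ j ∈ univ.erase t, (Complex.exp (-(2*Complex.I*β t)) - Complex.exp (-(2*Complex.I*β j)))) := by
        rw [hA', hy]
        have hc2 : (2*Complex.I*(w*w))^(m+2) = (2*Complex.I*(w*w))^m * (-4*(w*w*(w*w))) := by
          have h2 : (2*Complex.I*(w*w))^2 = -4*(w*w*(w*w)) := by
            rw [mul_pow, mul_pow, Complex.I_sq]; ring
          rw [pow_add, h2]
        rw [hc2]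
        field_simp
        ring
    _ = ((-(1/4) * Complex.exp (Complex.I * (∑ k, α k - ∑ j, β j))) *
          (∏ k, (Complex.exp (-(2*Complex.I*β t)) - Complex.exp (-(2*Complex.I*α k)))) *
          (2*Complex.I*Complex.exp (-(2*Complex.I*β t)))^(m+2)) *
          ((∏ j ∈ univ.erase t, Complex.sin (β j - β t)) *
            (2*Complex.I*Complex.exp (-(2*Complex.I*β t)))^m) := by
        rw [hS2]
    _ = (2*Complex.I*Complex.exp (-(2*Complex.I*β t)))^(m+2) *
        (2*Complex.I*Complex.exp (-(2*Complex.I*β t)))^m *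
        ((-(1/4) * Complex.exp (Complex.I * (∑ k, α k - ∑ j, β j))) *
          (∏ k, (Complex.exp (-(2*Complex.I*β t)) - Complex.exp (-(2*Complex.I*α k)))) *
          (∏ j ∈ univ.erase t, Complex.sin (β j - β t))) := by
        ring

lemma exp_prod_neg2I {k : ℕ} (f : Fin k → ℂ) :
    (∏ j, Complex.exp (-(2*Complex.I*f j))) = Complex.exp (-(2*Complex.I*∑ j, f j)) := by
  rw [← Complex.exp_sum]
  congr 1
  rw [Finset.mul_sum, ← Finset.sum_neg_distrib]

theorem kappa_one_meijer_identity (n : ℕ) (a : Fin (n + 1) → ℝ) (b : Fin n → ℝ)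
    (hb : ∀ j k, j ≠ k → Real.sin (b j - b k) ≠ 0)
    (ν : ℝ) (hν : ν = ∑ j, a j - ∑ j, b j) :
    ∑ t, Complex.exp (-(Complex.I * (b t : ℂ))) *
        (∏ k, Complex.sin ((a k : ℂ) - (b t : ℂ))) /
        (∏ j ∈ univ.erase t, Complex.sin ((b j : ℂ) - (b t : ℂ)))
      = (1 / 4) * Complex.exp (Complex.I * ν) *
          ((∑ j, Complex.exp (-(2 * Complex.I * (a j : ℂ)))) -
            ∑ j, Complex.exp (-(2 * Complex.I * (b j : ℂ)))) -
        (1 / 4) * Complex.exp (-(Complex.I * ν)) := by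
  rcases n with _ | m
  · -- n = 0
    have hν' : ν = a 0 := by simpa using hν
    have key : Complex.exp (Complex.I * ν) * Complex.exp (-(2 * Complex.I * (a 0 : ℂ)))
        = Complex.exp (-(Complex.I * ν)) := by
      rw [← Complex.exp_add]
      congr 1
      rw [hν']
      ring
    have hsum : (∑ j : Fin (0+1), Complex.exp (-(2 * Complex.I * (a j : ℂ))))
        = Complex.exp (-(2 * Complex.I * (a 0 : ℂ))) := Fin.sum_univ_one _
    simp only [Finset.univ_eq_empty, Finset.sum_empty]
    rw [hsum]
    linear_combination (-(1/4) : ℂ) * key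
  · -- n = m + 1
    set α : Fin (m+2) → ℂ := fun k => ((a k : ℝ) : ℂ) with hα
    set β : Fin (m+1) → ℂ := fun t => ((b t : ℝ) : ℂ) with hβ
    have hsC : ∀ (j k : Fin (m+1)), j ≠ k → Complex.sin (β j - β k) ≠ 0 := by
      intro j k hjk
      rw [hβ]
      simp only []
      rw [← Complex.ofReal_sub, ← Complex.ofReal_sin]
      exact Complex.ofReal_ne_zero.mpr (hb j k hjk)
    set x : Fin (m+2) → ℂ := fun k => Complex.exp (-(2*Complex.I*α k)) with hx
    set y : Fin (m+1) → ℂ := fun t => Complex.exp (-(2*Complex.I*β t)) with hyd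
    have hy0 : ∀ t, y t ≠ 0 := fun t => Complex.exp_ne_zero _
    have hyy : ∀ j t : Fin (m+1), j ≠ t → y j ≠ y t := by
      intro j t hjt heq
      have h := sin_fac (β j) (β t)
      have hzero : Complex.exp (-(2*Complex.I*β t)) - Complex.exp (-(2*Complex.I*β j)) = 0 := by
        rw [show Complex.exp (-(2*Complex.I*β t)) = y t from rfl,
          show Complex.exp (-(2*Complex.I*β j)) = y j from rfl, heq, sub_self]
      rw [hzero, mul_zero] at h
      rcases mul_eq_zero.mp h with h1 | h2
      · exact hsC j t hjt h1
      · exact mul_ne_zero (mul_ne_zero two_ne_zero Complex.I_ne_zero) (hy0 t) h2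
    calc ∑ t, Complex.exp (-(Complex.I * β t)) *
          (∏ k, Complex.sin (α k - β t)) /
          (∏ j ∈ univ.erase t, Complex.sin (β j - β t))
        = ∑ t, (-(1/4) * Complex.exp (Complex.I * (∑ k, α k - ∑ j, β j))) *
            ((∏ k, (y t - x k)) / (y t * ∏ j ∈ univ.erase t, (y t - y j))) :=
          Finset.sum_congr rfl fun t _ => per_term m α β t (fun j hj => hsC j t hj)
      _ = (-(1/4) * Complex.exp (Complex.I * (∑ k, α k - ∑ j, β j))) *
            ∑ t, ((∏ k, (y t - x k)) / (y t * ∏ j ∈ univ.erase t, (y t - y j))) := by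
          rw [← Finset.mul_sum]
      _ = (-(1/4) * Complex.exp (Complex.I * (∑ k, α k - ∑ j, β j))) *
            (-∑ k, x k + ∑ t, y t + (∏ k, x k) / (∏ t, y t)) := by
          rw [rat_id (m+1) x y hy0 hyy]
      _ = (1 / 4) * Complex.exp (Complex.I * ν) * ((∑ j, x j) - ∑ j, y j) -
          (1 / 4) * Complex.exp (-(Complex.I * ν)) := by
          have hνC : ((ν : ℝ) : ℂ) = ∑ k, α k - ∑ j, β j := by
            rw [hν]; push_cast; ring
          have key : Complex.exp (Complex.I * (ν:ℂ)) * ((∏ k, x k) / (∏ t, y t))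
              = Complex.exp (-(Complex.I * (ν:ℂ))) := by
            rw [hx, hyd]
            simp only []
            rw [exp_prod_neg2I α, exp_prod_neg2I β, ← Complex.exp_sub, ← Complex.exp_add]
            congr 1
            rw [hνC]
            ring
          rw [show Complex.I * (∑ k, α k - ∑ j, β j) = Complex.I * (ν:ℂ) by rw [hνC]]
          linear_combination (-(1/4) : ℂ) * key
end

section
/- Let γ_0,…,γ_n be nonzero complex numbers with γ_k² pairwise distinct, and let m ≥ 0, ϑ ≤ m+n integers with ϑ ≡ m+n (mod 2). Then w^{m+n} / ∏_{k=0}^{n}(w²−γ_k²) = Σ_{j=0}^{(m−n−ϑ)/2−1} h_j(γ_0²,…,γ_n²) w^{m−n−2−2j} + Σ_{k=0}^{n} γ_k^{m+n−ϑ} w^ϑ / [∏_{j≠k}(γ_k²−γ_j²)(w²−γ_k²)], for all complex w with w² ≠ γ_k² for all k (and w ≠ 0 if ϑ < 0), where h_j denotes the complete homogeneous symmetric polynomial of degree j and empty sums are zero. -/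
open Finset

/-- The complete homogeneous symmetric polynomial of degree `j` in the
variables `x 0, …, x (N-1)`: the sum over weakly increasing tuples
`k_1 ≤ ⋯ ≤ k_j` of the products `x k_1 ⋯ x k_j`. -/
noncomputable def hsym (N j : ℕ) (x : Fin N → ℂ) : ℂ :=
  ∑ f ∈ univ.filter (fun f : Fin j → Fin N => ∀ p q : Fin j, p ≤ q → f p ≤ f q),
    ∏ i, x (f i)

/-!
With `a k = γ k ^ 2` and `z = w ^ 2`, and after factoring out `w ^ ϑ`, the claim is the partial
fraction expansion of `z ^ s / ∏ k, (z - a k)`. For `s = 0` this is Lagrange interpolation of the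
constant `1`. Multiplying by `z` and using `z / (z - a) = 1 + a / (z - a)` passes from `s` to
`s + 1`, and adds the divided difference `∑ k, a k ^ s / ∏ j ≠ k, (a k - a j)` to the polynomial
part. For `s ≤ n` that divided difference is a coefficient of a Lagrange interpolant: `0` below
`n` and `1` at `n`. Above `n` it satisfies the recursion `h_{t+1}(a₀, …, aₙ) = a₀ h_t(a₀, …, aₙ) +
h_{t+1}(a₁, …, aₙ)` of the complete homogeneous symmetric polynomials.
-/

open Function Polynomial

theorem Fin.prod_univ_erase_succ {M : Type*} [CommMonoid M] {n : ℕ} (f : Fin (n + 1) → M)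
    (i : Fin n) : ∏ j ∈ univ.erase i.succ, f j = f 0 * ∏ j ∈ univ.erase i, f j.succ := by
  rw [Fin.univ_succ, erase_cons_of_ne _ (Fin.succ_ne_zero i).symm, Finset.prod_cons,
    show i.succ = (⟨Fin.succ, Fin.succ_injective _⟩ : Fin n ↪ Fin (n + 1)) i from rfl,
    ← map_erase, prod_map]
  rfl

theorem Fin.monotone_cons_zero {N t : ℕ} {g : Fin t → Fin (N + 1)} (hg : Monotone g) :
    Monotone (Fin.cons 0 g : Fin (t + 1) → Fin (N + 1)) := by
  intro p q hpq
  cases p using Fin.cases with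
  | zero => exact Fin.zero_le _
  | succ p =>
    cases q using Fin.cases with
    | zero => exact absurd hpq (by simp)
    | succ q => simpa using hg (Fin.succ_le_succ_iff.1 hpq)

theorem hsym_eq_sum_monotone (N j : ℕ) (x : Fin N → ℂ) :
    hsym N j x = ∑ f ∈ univ.filter (Monotone : (Fin j → Fin N) → Prop), ∏ i, x (f i) := rfl

theorem hsym_zero (N : ℕ) (x : Fin N → ℂ) : hsym N 0 x = 1 := by
  simp [hsym_eq_sum_monotone, Subsingleton.monotone]

theorem hsym_zero_succ (t : ℕ) (x : Fin 0 → ℂ) : hsym 0 (t + 1) x = 0 := by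
  simp [hsym_eq_sum_monotone]

theorem hsym_succ_succ (N t : ℕ) (x : Fin (N + 1) → ℂ) :
    hsym (N + 1) (t + 1) x = x 0 * hsym (N + 1) t x + hsym N (t + 1) (fun i => x i.succ) := by
  simp only [hsym_eq_sum_monotone, mul_sum]
  rw [← sum_filter_add_sum_filter_not _ (fun f => f 0 = 0), filter_filter, filter_filter]
  congr 1
  · symm
    refine sum_nbij' (fun g => Fin.cons (0 : Fin (N + 1)) g) Fin.tail ?_ ?_ ?_ ?_ ?_
    · intro g hg
      simp only [mem_filter, mem_univ, true_and] at hg ⊢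
      exact ⟨Fin.monotone_cons_zero hg, rfl⟩
    · intro f hf
      simp only [mem_filter, mem_univ, true_and] at hf ⊢
      exact hf.1.comp (Fin.strictMono_succ.monotone)
    · intro g _
      exact Fin.tail_cons _ _
    · intro f hf
      simp only [mem_filter, mem_univ, true_and] at hf
      rw [← hf.2, Fin.cons_self_tail]
    · intro g _
      simp [Fin.prod_univ_succ]
  · symm
    have hne : ∀ f ∈ univ.filter (fun f : Fin (t + 1) → Fin (N + 1) => Monotone f ∧ ¬f 0 = 0),
        ∀ i, f i ≠ 0 := fun f hf i =>
      Fin.pos_iff_ne_zero.1 <| (Fin.pos_iff_ne_zero.2 (mem_filter.1 hf).2.2).trans_le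
        ((mem_filter.1 hf).2.1 (Fin.zero_le i))
    refine sum_bij' (fun g _ => Fin.succ ∘ g) (fun f hf i => (f i).pred (hne f hf i))
      ?_ ?_ ?_ ?_ ?_
    · intro g hg
      simp only [mem_filter, mem_univ, true_and] at hg ⊢
      exact ⟨Fin.strictMono_succ.monotone.comp hg, Fin.succ_ne_zero _⟩
    · intro f hf
      simp only [mem_filter, mem_univ, true_and]
      intro p q hpq
      simpa [Fin.pred_le_pred_iff] using (mem_filter.1 hf).2.1 hpq
    · intro g _
      ext i
      simp
    · intro f hf
      ext i
      simp
    · intro g _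
      rfl

section DividedDifference

variable {K ι : Type*} [Field K] [Fintype ι] [DecidableEq ι]

theorem sum_pow_div_prod_sub_of_lt {a : ι → K} (ha : Injective a) {s : ℕ}
    (hs : s < Fintype.card ι) :
    ∑ k, a k ^ s / ∏ j ∈ univ.erase k, (a k - a j) = if s + 1 = Fintype.card ι then 1 else 0 := by
  have h := Lagrange.coeff_eq_sum (s := univ) ha.injOn (P := X ^ s) (by
    rw [degree_X_pow, card_univ]; exact_mod_cast hs)
  simp only [eval_pow, eval_X, coeff_X_pow, card_univ] at h
  rw [← h]
  exact if_congr (by omega) rfl rfl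

theorem one_div_prod_sub_eq_sum [Nonempty ι] {a : ι → K} (ha : Injective a) {z : K}
    (hz : ∀ k, z ≠ a k) :
    1 / ∏ k, (z - a k) = ∑ k, 1 / ((∏ j ∈ univ.erase k, (a k - a j)) * (z - a k)) := by
  have h := Lagrange.eval_interpolate_not_at_node (s := univ) (v := a) 1 (fun i _ => hz i)
  rw [Lagrange.interpolate_one ha.injOn univ_nonempty, eval_one, Lagrange.eval_nodal] at h
  refine (div_eq_iff (prod_ne_zero_iff.2 fun k _ => sub_ne_zero.2 (hz k))).2 (h.trans ?_)
  rw [mul_comm]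
  congr 1
  refine sum_congr rfl fun k _ => ?_
  rw [Lagrange.nodalWeight, prod_inv_distrib, Pi.one_apply, mul_one, one_div, mul_inv]

theorem sum_pow_succ_div_prod_sub {n : ℕ} {a : Fin (n + 1) → K} (ha : Injective a) (s : ℕ) :
    ∑ k, a k ^ (s + 1) / ∏ j ∈ univ.erase k, (a k - a j)
      = a 0 * ∑ k, a k ^ s / ∏ j ∈ univ.erase k, (a k - a j)
        + ∑ i : Fin n, a i.succ ^ s / ∏ j ∈ univ.erase i, (a i.succ - a j.succ) := by
  rw [mul_sum, ← sub_eq_iff_eq_add', ← sum_sub_distrib, Fin.sum_univ_succ]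
  simp only [Fin.prod_univ_erase_succ]
  rw [show ∀ x y : K, x ^ (s + 1) / y - x * (x ^ s / y) = 0 from fun x y => by ring, zero_add]
  refine sum_congr rfl fun i _ => ?_
  have hi : a i.succ - a 0 ≠ 0 := sub_ne_zero.2 (ha.ne (Fin.succ_ne_zero i))
  field_simp
  ring

theorem sum_pow_add_div_prod_sub :
    ∀ (n : ℕ) (a : Fin (n + 1) → ℂ), Injective a → ∀ t : ℕ,
      ∑ k, a k ^ (n + t) / ∏ j ∈ univ.erase k, (a k - a j) = hsym (n + 1) t a
  | n, a, ha, 0 => by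
    rw [sum_pow_div_prod_sub_of_lt ha (by simp), hsym_zero, Fintype.card_fin, if_pos rfl]
  | n, a, ha, t + 1 => by
    have hsucc : ∑ i : Fin n, a i.succ ^ (n + t) / ∏ j ∈ univ.erase i, (a i.succ - a j.succ)
        = hsym n (t + 1) (fun i => a i.succ) := by
      cases n with
      | zero => simp [hsym_zero_succ]
      | succ n =>
        rw [show n + 1 + t = n + (t + 1) by omega]
        exact sum_pow_add_div_prod_sub n _ (ha.comp (Fin.succ_injective _)) (t + 1)
    rw [← add_assoc, sum_pow_succ_div_prod_sub ha, sum_pow_add_div_prod_sub n a ha t, hsucc,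
      hsym_succ_succ]

theorem sum_hsym_mul_pow_succ (n : ℕ) (a : Fin (n + 1) → ℂ) (ha : Injective a) (s : ℕ) (z : ℂ) :
    ∑ j ∈ range (s + 1 - n), hsym (n + 1) j a * z ^ (s + 1 - 1 - n - j)
      = z * ∑ j ∈ range (s - n), hsym (n + 1) j a * z ^ (s - 1 - n - j)
        + ∑ k, a k ^ s / ∏ j ∈ univ.erase k, (a k - a j) := by
  rcases lt_or_ge s n with hs | hs
  · rw [sum_pow_div_prod_sub_of_lt ha (by rw [Fintype.card_fin]; omega), Nat.sub_eq_zero_of_le hs,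
      Nat.sub_eq_zero_of_le hs.le]
    simp [hs.ne]
  · obtain ⟨t, rfl⟩ := Nat.exists_eq_add_of_le hs
    rw [sum_pow_add_div_prod_sub n a ha t, show n + t + 1 - n = t + 1 by omega,
      show n + t - n = t by omega, sum_range_succ, mul_sum]
    congr 1
    · refine sum_congr rfl fun j hj => ?_
      rw [mem_range] at hj
      rw [show n + t + 1 - 1 - n - j = (n + t - 1 - n - j) + 1 by omega, pow_succ]
      ring
    · simp

theorem pow_div_prod_sub_eq (n : ℕ) (a : Fin (n + 1) → ℂ) (ha : Injective a) (z : ℂ)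
    (hz : ∀ k, z ≠ a k) (s : ℕ) :
    z ^ s / ∏ k, (z - a k)
      = ∑ j ∈ range (s - n), hsym (n + 1) j a * z ^ (s - 1 - n - j)
        + ∑ k, a k ^ s / ((∏ j ∈ univ.erase k, (a k - a j)) * (z - a k)) := by
  induction s with
  | zero => simpa using one_div_prod_sub_eq_sum ha hz
  | succ s ih =>
    have hterm : ∀ k, z * (a k ^ s / ((∏ j ∈ univ.erase k, (a k - a j)) * (z - a k)))
        = a k ^ s / ∏ j ∈ univ.erase k, (a k - a j)
          + a k ^ (s + 1) / ((∏ j ∈ univ.erase k, (a k - a j)) * (z - a k)) := by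
      intro k
      have hzk : z - a k ≠ 0 := sub_ne_zero.2 (hz k)
      have hc : ∏ j ∈ univ.erase k, (a k - a j) ≠ 0 :=
        prod_ne_zero_iff.2 fun j hj => sub_ne_zero.2 (ha.ne (ne_of_mem_erase hj).symm)
      field_simp
      ring
    calc z ^ (s + 1) / ∏ k, (z - a k) = z * (z ^ s / ∏ k, (z - a k)) := by ring
      _ = z * ∑ j ∈ range (s - n), hsym (n + 1) j a * z ^ (s - 1 - n - j)
          + ∑ k, (a k ^ s / ∏ j ∈ univ.erase k, (a k - a j)
            + a k ^ (s + 1) / ((∏ j ∈ univ.erase k, (a k - a j)) * (z - a k))) := by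
        rw [ih, mul_add, mul_sum univ, sum_congr rfl fun k _ => hterm k]
      _ = _ := by
        rw [sum_add_distrib, sum_hsym_mul_pow_succ n a ha]
        ring

theorem zpow_add_two_mul {G₀ : Type*} [GroupWithZero G₀] {w : G₀} {ϑ : ℤ} (h : 0 ≤ ϑ ∨ w ≠ 0)
    (t : ℕ) : w ^ (ϑ + 2 * t) = w ^ ϑ * (w ^ 2) ^ t := by
  rcases h with h | h
  · lift ϑ to ℕ using h
    norm_cast
    rw [pow_add, pow_mul]
  · rw [zpow_add₀ h, ← pow_mul]
    norm_cast

theorem monomial_partial_fraction_general (n : ℕ) (γ : Fin (n + 1) → ℂ)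
    (hγ : ∀ j k, j ≠ k → γ j ^ 2 ≠ γ k ^ 2)
    (m : ℕ) (ϑ : ℤ) (hϑ : ϑ ≤ (m : ℤ) + n)
    (hpar : ϑ % 2 = ((m : ℤ) + n) % 2)
    (w : ℂ) (hw : ∀ k, w ^ 2 ≠ γ k ^ 2) (hw0 : ϑ < 0 → w ≠ 0) :
    w ^ (m + n) / ∏ k, (w ^ 2 - γ k ^ 2)
      = (∑ j ∈ Finset.range (((m : ℤ) - n - ϑ) / 2).toNat,
          hsym (n + 1) j (fun k => γ k ^ 2) * w ^ ((m : ℤ) - n - 2 - 2 * j))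
        + ∑ k, γ k ^ ((m : ℤ) + n - ϑ) * w ^ ϑ /
            ((∏ j ∈ univ.erase k, (γ k ^ 2 - γ j ^ 2)) * (w ^ 2 - γ k ^ 2)) := by
  obtain ⟨s, hs⟩ : ∃ s : ℕ, (m : ℤ) + n = ϑ + 2 * s := ⟨(((m : ℤ) + n - ϑ) / 2).toNat, by omega⟩
  have hw' : 0 ≤ ϑ ∨ w ≠ 0 := (le_or_gt 0 ϑ).imp_right hw0
  have hinj : Injective fun k => γ k ^ 2 := fun j k h => by_contra fun hjk => hγ j k hjk h
  calc w ^ (m + n) / ∏ k, (w ^ 2 - γ k ^ 2)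
      = w ^ ϑ * ((w ^ 2) ^ s / ∏ k, (w ^ 2 - γ k ^ 2)) := by
        rw [← zpow_natCast, Nat.cast_add, hs, zpow_add_two_mul hw', mul_div_assoc]
    _ = _ := by
      rw [pow_div_prod_sub_eq n _ hinj _ hw, mul_add, mul_sum, mul_sum,
        show (((m : ℤ) - n - ϑ) / 2).toNat = s - n by omega]
      congr 1
      · refine sum_congr rfl fun j hj => ?_
        rw [mem_range] at hj
        rw [show (m : ℤ) - n - 2 - 2 * j = ϑ + 2 * (s - 1 - n - j : ℕ) by omega,
          zpow_add_two_mul hw']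
        ring
      · refine sum_congr rfl fun k _ => ?_
        rw [show (m : ℤ) + n - ϑ = ((2 * s : ℕ) : ℤ) by push_cast; omega, zpow_natCast, pow_mul]
        ring

theorem monomial_partial_fraction (n : ℕ) (γ : Fin (n + 1) → ℂ)
    (hγ0 : ∀ k, γ k ≠ 0)
    (hγ : ∀ j k, j ≠ k → γ j ^ 2 ≠ γ k ^ 2)
    (m : ℕ) (ϑ : ℤ) (hϑ : ϑ ≤ (m : ℤ) + n)
    (hpar : ϑ % 2 = ((m : ℤ) + n) % 2)
    (w : ℂ) (hw : ∀ k, w ^ 2 ≠ γ k ^ 2) (hw0 : ϑ < 0 → w ≠ 0) :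
    w ^ (m + n) / ∏ k, (w ^ 2 - γ k ^ 2)
      = (∑ j ∈ Finset.range (((m : ℤ) - n - ϑ) / 2).toNat,
          hsym (n + 1) j (fun k => γ k ^ 2) * w ^ ((m : ℤ) - n - 2 - 2 * j))
        + ∑ k, γ k ^ ((m : ℤ) + n - ϑ) * w ^ ϑ /
            ((∏ j ∈ univ.erase k, (γ k ^ 2 - γ j ^ 2)) * (w ^ 2 - γ k ^ 2)) :=
  monomial_partial_fraction_general n γ hγ m ϑ hϑ hpar w hw hw0
end DividedDifference
end

section
/- Let γ_0,…,γ_n be nonzero complex numbers with γ_k² pairwise distinct and P(w) = Σ_{m=−n−1}^{n+1} c_m w^m a Laurent polynomial. Then for every w ∉ {0, ±γ_0,…,±γ_n}: P(w) w^{n+1} / ∏_{k=0}^{n}(w²−γ_k²) = c_{n+1} + (1/2) Σ_{k=0}^{n} γ_k^n / ∏_{j≠k}(γ_k²−γ_j²) · [ P(γ_k)/(w−γ_k) + (−1)^n P(−γ_k)/(w+γ_k) ]. -/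
set_option maxHeartbeats 1000000


open Finset

/-- The Laurent polynomial `P(w) = ∑_{m=-N}^{N} c_m w^m`. -/
noncomputable def LaurentP (c : ℤ → ℂ) (N : ℕ) (w : ℂ) : ℂ :=
  ∑ m ∈ Finset.Icc (-(N : ℤ)) (N : ℤ), c m * w ^ m

theorem chu_partial_fraction (n : ℕ) (γ : Fin (n + 1) → ℂ)
    (hγ0 : ∀ k, γ k ≠ 0)
    (hγ : ∀ j k, j ≠ k → γ j ^ 2 ≠ γ k ^ 2)
    (c : ℤ → ℂ) (w : ℂ) (hw0 : w ≠ 0)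
    (hw : ∀ k, w ≠ γ k ∧ w ≠ -γ k) :
    LaurentP c (n + 1) w * w ^ (n + 1) / ∏ k, (w ^ 2 - γ k ^ 2)
      = c ((n : ℤ) + 1) +
        (1 / 2) * ∑ k, γ k ^ n / (∏ j ∈ univ.erase k, (γ k ^ 2 - γ j ^ 2)) *
          (LaurentP c (n + 1) (γ k) / (w - γ k) +
            (-1) ^ n * LaurentP c (n + 1) (-γ k) / (w + γ k)) := by
  classical
  set v : Fin (n + 1) × Bool → ℂ := fun p => if p.2 then γ p.1 else -γ p.1 with hv
  have hkey : ∀ a b : Fin (n + 1), (γ a = γ b ∨ γ a = -γ b) → a = b := by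
    intro a b hab
    by_contra h
    refine hγ a b h ?_
    rcases hab with h' | h' <;> rw [h'] <;> ring
  have hvinj : Set.InjOn v (univ : Finset (Fin (n + 1) × Bool)) := by
    rintro ⟨a, ba⟩ - ⟨b, bb⟩ - hab
    cases ba <;> cases bb <;> simp only [v, Bool.false_eq_true, Bool.not_true, Bool.not_false, if_false, if_true] at hab
    · exact Prod.ext (hkey a b (Or.inl (neg_injective hab))) rfl
    · have hab' : γ a = -γ b := by linear_combination -hab
      have h1 : a = b := hkey a b (Or.inr hab')
      subst h1
      exact absurd (by linear_combination (1/2 : ℂ) * hab') (hγ0 a)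
    · have h1 : a = b := hkey a b (Or.inr hab)
      subst h1
      exact absurd (by linear_combination (1/2 : ℂ) * hab) (hγ0 a)
    · exact Prod.ext (hkey a b (Or.inl hab)) rfl
  -- the polynomial F with F(x) = P(x) x^{n+1} for x ≠ 0
  have hFdef : ∃ F : Polynomial ℂ, F = ∑ m ∈ Finset.Icc (-((n+1 : ℕ) : ℤ)) ((n+1 : ℕ) : ℤ),
      Polynomial.C (c m) * Polynomial.X ^ (m + (n+1 : ℕ)).toNat := ⟨_, rfl⟩
  obtain ⟨F, hF⟩ := hFdef
  have hFeval : ∀ x : ℂ, x ≠ 0 → F.eval x = LaurentP c (n + 1) x * x ^ (n + 1) := by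
    intro x hx
    rw [hF, Polynomial.eval_finset_sum, LaurentP, Finset.sum_mul]
    refine Finset.sum_congr rfl fun m hm => ?_
    rw [Polynomial.eval_mul, Polynomial.eval_C, Polynomial.eval_pow, Polynomial.eval_X, mul_assoc]
    congr 1
    have hm' : 0 ≤ m + ((n+1 : ℕ) : ℤ) := by
      have := (Finset.mem_Icc.mp hm).1; omega
    calc x ^ (m + ((n+1 : ℕ) : ℤ)).toNat
        = x ^ (((m + ((n+1 : ℕ) : ℤ)).toNat : ℤ)) := (zpow_natCast x _).symm
      _ = x ^ (m + ((n+1 : ℕ) : ℤ)) := by rw [Int.toNat_of_nonneg hm']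
      _ = x ^ m * x ^ (((n+1 : ℕ) : ℤ)) := zpow_add₀ hx _ _
      _ = x ^ m * x ^ (n+1 : ℕ) := by rw [zpow_natCast]
  set Q : Polynomial ℂ := Lagrange.nodal univ v with hQ
  have hQeval : ∀ x : ℂ, Q.eval x = ∏ k, (x ^ 2 - γ k ^ 2) := by
    intro x
    rw [hQ, Lagrange.eval_nodal, Fintype.prod_prod_type]
    refine Finset.prod_congr rfl fun k _ => ?_
    rw [Fintype.prod_bool]
    simp only [v, Bool.false_eq_true, Bool.not_true, Bool.not_false, if_false, if_true]
    ring
  have hcard : (univ : Finset (Fin (n + 1) × Bool)).card = 2 * (n + 1) := by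
    simp [Finset.card_univ]
    ring
  have hQdeg : Q.natDegree = 2 * (n + 1) := by
    rw [hQ, Lagrange.natDegree_nodal, hcard]
  have hQcoeff : ∀ m : ℕ, 2 * (n + 1) ≤ m → Q.coeff m = if m = 2 * (n + 1) then 1 else 0 := by
    intro m hm
    rcases eq_or_lt_of_le hm with h | h
    · rw [if_pos h.symm, ← h, ← hQdeg]
      exact (Lagrange.nodal_monic).coeff_natDegree
    · rw [if_neg (by omega)]
      exact Polynomial.coeff_eq_zero_of_natDegree_lt (by omega)
  have hFcoeff : ∀ m : ℕ, 2 * (n + 1) ≤ m →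
      F.coeff m = if m = 2 * (n + 1) then c ((n+1 : ℕ) : ℤ) else 0 := by
    intro m hm
    rw [hF, Polynomial.finset_sum_coeff]
    simp only [Polynomial.coeff_C_mul, Polynomial.coeff_X_pow]
    rcases eq_or_lt_of_le hm with h | h
    · rw [if_pos h.symm]
      rw [Finset.sum_eq_single (((n+1 : ℕ) : ℤ))]
      · rw [if_pos (by omega), mul_one]
      · intro b hb hbN
        have := Finset.mem_Icc.mp hb
        rw [if_neg (by omega), mul_zero]
      · intro hN
        exact absurd (Finset.mem_Icc.mpr ⟨by omega, le_refl _⟩) hN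
    · rw [if_neg (by omega)]
      refine Finset.sum_eq_zero fun b hb => ?_
      have := Finset.mem_Icc.mp hb
      rw [if_neg (by omega), mul_zero]
  have hdeg : (F - Polynomial.C (c ((n+1 : ℕ) : ℤ)) * Q).degree
      < ((univ : Finset (Fin (n + 1) × Bool)).card : ℕ) := by
    rw [hcard, Polynomial.degree_lt_iff_coeff_zero]
    intro m hm
    rw [Polynomial.coeff_sub, Polynomial.coeff_C_mul, hFcoeff m hm, hQcoeff m hm]
    split <;> simp
  have heq := Lagrange.eq_interpolate hvinj hdeg
  have hwv : ∀ i ∈ (univ : Finset (Fin (n + 1) × Bool)), w ≠ v i := by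
    rintro ⟨k, b⟩ -
    cases b <;> simp only [v, Bool.false_eq_true, Bool.not_true, Bool.not_false, if_false, if_true]
    · exact (hw k).2
    · exact (hw k).1
  have hmain := congrArg (Polynomial.eval w) heq
  rw [Lagrange.eval_interpolate_not_at_node _ hwv] at hmain
  have hGnode : ∀ i : Fin (n + 1) × Bool,
      Polynomial.eval (v i) (F - Polynomial.C (c ((n+1 : ℕ) : ℤ)) * Q) = Polynomial.eval (v i) F := by
    intro i
    rw [Polynomial.eval_sub, Polynomial.eval_mul, Polynomial.eval_C,
      Lagrange.eval_nodal_at_node (Finset.mem_univ i), mul_zero, sub_zero]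
  simp only [hGnode, Polynomial.eval_sub, Polynomial.eval_mul, Polynomial.eval_C] at hmain
  -- hmain : F.eval w - c (n+1) * Q.eval w = Q.eval w * ∑ i, nodalWeight * (w - v i)⁻¹ * F.eval (v i)
  have hQw : Q.eval w ≠ 0 := by
    rw [hQeval]
    refine Finset.prod_ne_zero_iff.mpr fun k _ => ?_
    have h1 : w - γ k ≠ 0 := sub_ne_zero.mpr (hw k).1
    have h2 : w + γ k ≠ 0 := by
      intro h
      exact (hw k).2 (by linear_combination h)
    have : w ^ 2 - γ k ^ 2 = (w - γ k) * (w + γ k) := by ring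
    rw [this]
    exact mul_ne_zero h1 h2
  -- erase of the product index set
  have herase : ∀ (k : Fin (n + 1)) (b : Bool) (f : Fin (n + 1) × Bool → ℂ),
      (∏ j ∈ (univ : Finset (Fin (n + 1) × Bool)).erase (k, b), f j)
        = f (k, !b) * ∏ j ∈ univ.erase k, (f (j, true) * f (j, false)) := by
    intro k b f
    have hset : (univ : Finset (Fin (n + 1) × Bool)).erase (k, b)
        = insert (k, !b) ((univ.erase k) ×ˢ (univ : Finset Bool)) := by
      ext ⟨j, b'⟩
      simp only [Finset.mem_erase, Finset.mem_insert, Finset.mem_product, Finset.mem_univ,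
        and_true, true_and, Prod.mk.injEq, ne_eq, not_and]
      cases b <;> cases b' <;> simp <;> tauto
    rw [hset, Finset.prod_insert (by simp), Finset.prod_product]
    congr 1
    exact Finset.prod_congr rfl fun j hj => by rw [Fintype.prod_bool]
  -- the sum identity
  have hS : (∑ i : Fin (n + 1) × Bool,
        Lagrange.nodalWeight univ v i * (w - v i)⁻¹ * Polynomial.eval (v i) F)
      = (1 / 2) * ∑ k, γ k ^ n / (∏ j ∈ univ.erase k, (γ k ^ 2 - γ j ^ 2)) *
          (LaurentP c (n + 1) (γ k) / (w - γ k) +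
            (-1) ^ n * LaurentP c (n + 1) (-γ k) / (w + γ k)) := by
    rw [Fintype.sum_prod_type, Finset.mul_sum]
    refine Finset.sum_congr rfl fun k _ => ?_
    rw [Fintype.sum_bool]
    have hγk := hγ0 k
    have hPk : (∏ j ∈ univ.erase k, (γ k ^ 2 - γ j ^ 2)) ≠ 0 :=
      Finset.prod_ne_zero_iff.mpr fun j hj =>
        sub_ne_zero.mpr (hγ k j ((Finset.mem_erase.mp hj).1.symm))
    have hwt : Lagrange.nodalWeight univ v (k, true)
        = ((2 * γ k) * ∏ j ∈ univ.erase k, (γ k ^ 2 - γ j ^ 2))⁻¹ := by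
      rw [Lagrange.nodalWeight, herase k true (fun j => (v (k, true) - v j)⁻¹)]
      simp only [v, Bool.false_eq_true, Bool.not_true, Bool.not_false, if_false, if_true, Bool.not_true]
      rw [mul_inv, ← Finset.prod_inv_distrib]
      congr 1
      · congr 1; ring
      · exact Finset.prod_congr rfl fun j hj => by rw [← mul_inv]; congr 1; ring
    have hwf : Lagrange.nodalWeight univ v (k, false)
        = ((-(2 * γ k)) * ∏ j ∈ univ.erase k, (γ k ^ 2 - γ j ^ 2))⁻¹ := by
      rw [Lagrange.nodalWeight, herase k false (fun j => (v (k, false) - v j)⁻¹)]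
      simp only [v, Bool.false_eq_true, Bool.not_true, Bool.not_false, if_false, if_true, Bool.not_false]
      rw [mul_inv, ← Finset.prod_inv_distrib]
      congr 1
      · congr 1; ring
      · exact Finset.prod_congr rfl fun j hj => by rw [← mul_inv]; congr 1; ring
    simp only [v, Bool.false_eq_true, Bool.not_true, Bool.not_false, if_false, if_true]
    rw [hwt, hwf, hFeval (γ k) hγk, hFeval (-γ k) (neg_ne_zero.mpr hγk)]
    have h1 : w - γ k ≠ 0 := sub_ne_zero.mpr (hw k).1
    have h2 : w + γ k ≠ 0 := by
      intro h
      exact (hw k).2 (by linear_combination h)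
    rw [neg_pow, pow_succ (-1 : ℂ) n, pow_succ (γ k) n, sub_neg_eq_add]
    set A := LaurentP c (n + 1) (γ k) with hA
    set B := LaurentP c (n + 1) (-γ k) with hB
    set u := ((-1 : ℂ)) ^ n with hu
    set gn := γ k ^ n with hgn
    set P := ∏ j ∈ univ.erase k, (γ k ^ 2 - γ j ^ 2) with hPdef
    linear_combination (2⁻¹ * P⁻¹ * (w - γ k)⁻¹ * A * gn + 2⁻¹ * P⁻¹ * (w + γ k)⁻¹ * B * u * gn) *
      (inv_mul_cancel₀ hγk)
  rw [← hFeval w hw0, ← hQeval w]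
  have hc : c ((n : ℤ) + 1) = c ((n+1 : ℕ) : ℤ) := by norm_num
  rw [hc, div_eq_iff hQw]
  linear_combination hmain + Polynomial.eval w Q * hS
end

section
/- Let γ_0,…,γ_n be nonzero complex numbers with γ_k² pairwise distinct and P(w) = Σ_{m=−n−2}^{n+2} c_m w^m. Then for w ∉ {0, ±γ_0,…,±γ_n}: P(w) w^{n+1} / ∏_{k=0}^{n}(w²−γ_k²) = c_{n+2} w + c_{n+1} − (−1)^n c_{−n−2} / (w ∏_{k=0}^{n} γ_k²) + (1/2) Σ_{k=0}^{n} γ_k^n / ∏_{j≠k}(γ_k²−γ_j²) · [ P(γ_k)/(w−γ_k) + (−1)^n P(−γ_k)/(w+γ_k) ]. -/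
open Finset

open Polynomial in
lemma key_pf {ι : Type*} [DecidableEq ι] (s : Finset ι) (v : ι → ℂ)
    (hinj : Set.InjOn v ↑s) (f : ℂ[X]) (hdeg : f.degree ≤ s.card) (x : ℂ)
    (hx : ∀ i ∈ s, x ≠ v i) :
    f.eval x / ∏ i ∈ s, (x - v i)
      = f.coeff s.card + ∑ i ∈ s, f.eval (v i)
          / ((x - v i) * ∏ j ∈ s.erase i, (v i - v j)) := by
  set a := f.coeff s.card with ha
  set g := f - C a * Lagrange.nodal s v with hg
  have hDne : (∏ i ∈ s, (x - v i)) ≠ 0 := by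
    rw [prod_ne_zero_iff]
    intro i hi
    exact sub_ne_zero_of_ne (hx i hi)
  have hgdeg : g.degree < s.card := by
    rw [Polynomial.degree_lt_iff_coeff_zero]
    intro m hm
    rcases eq_or_lt_of_le hm with h | h
    · have hm' : m = s.card := by exact_mod_cast h.symm
      subst hm'
      have hcn : (Lagrange.nodal s v).coeff s.card = 1 := by
        have h1 := (Lagrange.nodal_monic (s := s) (v := v)).coeff_natDegree
        rwa [Lagrange.natDegree_nodal] at h1
      simp [hg, hcn, ← ha]
    · have hm' : (s.card : ℕ) < m := by exact_mod_cast h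
      have h1 : f.coeff m = 0 := by
        apply Polynomial.coeff_eq_zero_of_degree_lt
        exact lt_of_le_of_lt hdeg (by exact_mod_cast h)
      have h2 : (Lagrange.nodal s v).coeff m = 0 := by
        apply Polynomial.coeff_eq_zero_of_degree_lt
        rw [Lagrange.degree_nodal]
        exact_mod_cast h
      simp [hg, h1, h2]
  have hge : g = Lagrange.interpolate s v (fun i => g.eval (v i)) :=
    Lagrange.eq_interpolate hinj hgdeg
  have hgvals : ∀ i ∈ s, g.eval (v i) = f.eval (v i) := by
    intro i hi
    simp [hg, Lagrange.eval_nodal_at_node hi]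
  have hgx : g.eval x = (∏ i ∈ s, (x - v i)) *
      ∑ i ∈ s, Lagrange.nodalWeight s v i * (x - v i)⁻¹ * f.eval (v i) := by
    conv_lhs => rw [hge]
    rw [Lagrange.eval_interpolate_not_at_node _ hx, Lagrange.eval_nodal]
    congr 1
    exact sum_congr rfl fun i hi => by rw [hgvals i hi]
  have hfx : f.eval x = a * (∏ i ∈ s, (x - v i)) + (∏ i ∈ s, (x - v i)) *
      ∑ i ∈ s, Lagrange.nodalWeight s v i * (x - v i)⁻¹ * f.eval (v i) := by
    rw [← hgx]
    simp [hg, Lagrange.eval_nodal]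
  rw [hfx, add_div, mul_div_assoc, div_self hDne, mul_one,
    mul_comm (∏ i ∈ s, (x - v i)), mul_div_assoc, div_self hDne, mul_one]
  congr 1
  refine sum_congr rfl fun i hi => ?_
  rw [Lagrange.nodalWeight, div_eq_mul_inv, mul_inv, ← prod_inv_distrib]
  ring

open Polynomial in
lemma pf_fun {ι : Type*} [DecidableEq ι] (s : Finset ι) (v : ι → ℂ)
    (hinj : Set.InjOn v ↑s) (b : ℕ → ℂ) (x : ℂ) (hx : ∀ i ∈ s, x ≠ v i) :
    (∑ t ∈ Finset.range (s.card + 1), b t * x ^ t) / ∏ i ∈ s, (x - v i)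
      = b s.card + ∑ i ∈ s, (∑ t ∈ Finset.range (s.card + 1), b t * (v i) ^ t)
          / ((x - v i) * ∏ j ∈ s.erase i, (v i - v j)) := by
  set f : ℂ[X] := ∑ t ∈ Finset.range (s.card + 1), C (b t) * X ^ t with hf
  have heval : ∀ y : ℂ, f.eval y = ∑ t ∈ Finset.range (s.card + 1), b t * y ^ t := by
    intro y; simp [hf, Polynomial.eval_finset_sum]
  have hdeg : f.degree ≤ s.card := by
    refine le_trans (Polynomial.degree_sum_le _ _) ?_
    refine Finset.sup_le fun t ht => ?_
    refine le_trans (Polynomial.degree_C_mul_X_pow_le _ _) ?_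
    exact_mod_cast Nat.lt_succ_iff.mp (Finset.mem_range.mp ht)
  have hcoeff : f.coeff s.card = b s.card := by
    rw [hf, Polynomial.finset_sum_coeff]
    rw [Finset.sum_eq_single s.card]
    · simp
    · intro t ht htne
      simp [Polynomial.coeff_X_pow, htne, Ne.symm htne]
    · intro hns
      exact absurd (Finset.mem_range.mpr (Nat.lt_succ_self _)) hns
  have h := key_pf s v hinj f hdeg x hx
  simp only [heval, hcoeff] at h
  exact h

lemma sum_range_two_mul' (f : ℕ → ℂ) (k : ℕ) :
    ∑ i ∈ Finset.range (2 * k), f i = ∑ t ∈ Finset.range k, (f (2 * t) + f (2 * t + 1)) := by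
  induction k with
  | zero => simp
  | succ k ih =>
    have h2 : 2 * (k + 1) = (2 * k + 1) + 1 := by ring
    rw [h2, Finset.sum_range_succ, Finset.sum_range_succ, ih, Finset.sum_range_succ,
      add_assoc]

lemma numer_decomp (n : ℕ) (c : ℤ → ℂ) (w : ℂ) (hw0 : w ≠ 0) :
    LaurentP c (n + 2) w * w ^ (n + 1) =
      (∑ t ∈ Finset.range (n + 2), c (2 * (t : ℤ) - n - 1) * (w ^ 2) ^ t)
      + w * (∑ t ∈ Finset.range (n + 2), c (2 * (t : ℤ) - n) * (w ^ 2) ^ t)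
      + c (-(n : ℤ) - 2) / w := by
  have h1 : LaurentP c (n + 2) w * w ^ (n + 1)
      = ∑ j ∈ Finset.range (2 * n + 5), c ((j : ℤ) - (n + 2)) * w ^ ((j : ℤ) - 1) := by
    rw [LaurentP, Finset.sum_mul]
    refine Finset.sum_nbij' (fun m => (m + (n + 2)).toNat) (fun j => (j : ℤ) - (n + 2))
      ?_ ?_ ?_ ?_ ?_
    · intro m hm
      rw [Finset.mem_Icc] at hm
      simp only [Finset.mem_range]
      omega
    · intro j hj
      rw [Finset.mem_range] at hj
      simp only [Finset.mem_Icc]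
      omega
    · intro m hm
      rw [Finset.mem_Icc] at hm
      omega
    · intro j hj
      rw [Finset.mem_range] at hj
      omega
    · intro m hm
      rw [Finset.mem_Icc] at hm
      have hcast : ((((m + (n + 2)).toNat) : ℤ)) = m + (n + 2) := by omega
      rw [hcast]
      have he : m + ((n : ℤ) + 2) - 1 = m + (n + 1) := by ring
      rw [he]
      have : (w : ℂ) ^ (m + ((n : ℤ) + 1)) = w ^ m * w ^ ((n : ℤ) + 1) := zpow_add₀ hw0 _ _
      rw [this]
      have : (w : ℂ) ^ ((n : ℤ) + 1) = w ^ (n + 1) := by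
        rw [← zpow_natCast]
        norm_cast
      rw [this, mul_assoc]
      have e3 : m + ((n : ℤ) + 2) - ((n : ℤ) + 2) = m := by ring
      rw [e3]
  rw [h1]
  have h2 : (2 * n + 5) = (2 * (n + 2)) + 1 := by ring
  rw [h2, Finset.sum_range_succ']
  have h3 : ∀ j : ℕ, c (((j : ℤ) + 1) - (n + 2)) * w ^ (((j : ℤ) + 1) - 1)
      = c ((j : ℤ) - n - 1) * w ^ j := by
    intro j
    have e1 : ((j : ℤ) + 1) - (n + 2) = (j : ℤ) - n - 1 := by ring
    have e2 : ((j : ℤ) + 1) - 1 = (j : ℤ) := by ring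
    rw [e1, e2, zpow_natCast]
  simp only [Nat.cast_add, Nat.cast_one] at h3 ⊢
  rw [Finset.sum_congr rfl (fun j _ => h3 j)]
  rw [sum_range_two_mul' (fun j => c ((j : ℤ) - n - 1) * w ^ j) (n + 2),
    Finset.sum_add_distrib]
  have h4 : ∀ t : ℕ, c ((2 * t : ℕ) - (n : ℤ) - 1) * w ^ (2 * t)
      = c (2 * (t : ℤ) - n - 1) * (w ^ 2) ^ t := by
    intro t
    rw [pow_mul]
    norm_num
  have h5 : ∀ t : ℕ, c (((2 * t + 1 : ℕ) : ℤ) - n - 1) * w ^ (2 * t + 1)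
      = w * (c (2 * (t : ℤ) - n) * (w ^ 2) ^ t) := by
    intro t
    have e1 : ((2 * t + 1 : ℕ) : ℤ) - n - 1 = 2 * (t : ℤ) - n := by push_cast; ring
    rw [e1, pow_succ, pow_mul]
    ring
  rw [Finset.sum_congr rfl (fun t _ => h4 t), Finset.sum_congr rfl (fun t _ => h5 t),
    ← Finset.mul_sum]
  have e4 : ((0 : ℕ) : ℤ) - ((n : ℤ) + 2) = -(n : ℤ) - 2 := by push_cast; ring
  have e5 : ((0 : ℕ) : ℤ) - 1 = -1 := by norm_num
  rw [e4, e5, zpow_neg_one, div_eq_mul_inv]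

lemma frac_side (w A B cnum γ D : ℂ) (hγ : γ ≠ 0) (hD : D ≠ 0) :
    A / D + w * B / D + w * cnum / (γ ^ 2 * D)
      = (A * γ ^ 2 + w * B * γ ^ 2 + w * cnum) / (γ ^ 2 * D) := by
  field_simp

lemma frac_rhs (Np Nm u v Δ γ : ℂ) (hu : u ≠ 0) (hv : v ≠ 0) (hΔ : Δ ≠ 0)
    (hγ : γ ≠ 0) (s : ℂ) :
    1 / 2 * (Np / γ / (Δ * u) + s * (Nm / γ) / (Δ * v))
      = (Np * v + s * Nm * u) / (2 * γ * u * v * Δ) := by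
  have hA : γ * (Δ * u) ≠ 0 := mul_ne_zero hγ (mul_ne_zero hΔ hu)
  have hB : γ * (Δ * v) ≠ 0 := mul_ne_zero hγ (mul_ne_zero hΔ hv)
  rw [div_div, mul_div_assoc', div_div, div_add_div _ _ hA hB, div_mul_div_comm,
    div_eq_div_iff (mul_ne_zero two_ne_zero (mul_ne_zero hA hB))
      (by exact mul_ne_zero (mul_ne_zero (mul_ne_zero (mul_ne_zero two_ne_zero hγ) hu) hv) hΔ)]
  ring

lemma perk (n : ℕ) (γ w A B cm Δ Pp Pm : ℂ) (hγ : γ ≠ 0) (h1 : w - γ ≠ 0)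
    (h2 : w + γ ≠ 0) (hΔ : Δ ≠ 0)
    (hp : Pp * γ ^ (n + 1) = A + γ * B + cm / γ)
    (hm : Pm * (-γ) ^ (n + 1) = A - γ * B - cm / γ) :
    A / ((w ^ 2 - γ ^ 2) * Δ) + w * B / ((w ^ 2 - γ ^ 2) * Δ)
        + w * cm / (γ ^ 2 * ((w ^ 2 - γ ^ 2) * Δ))
      = (1 / 2) * (γ ^ n / Δ * (Pp / (w - γ) + (-1) ^ n * Pm / (w + γ))) := by
  have hw2 : w ^ 2 - γ ^ 2 = (w - γ) * (w + γ) := by ring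
  have hD : w ^ 2 - γ ^ 2 ≠ 0 := by rw [hw2]; exact mul_ne_zero h1 h2
  have hQp : γ ^ n * Pp = (A + γ * B + cm / γ) / γ := by
    rw [eq_div_iff hγ]
    linear_combination hp
  have key : γ ^ n * ((-1) ^ n * Pm) * γ = -(A - γ * B - cm / γ) := by
    rcases Nat.even_or_odd n with he | ho
    · rw [he.neg_one_pow, one_mul]
      rw [(Even.add_one he).neg_pow γ] at hm
      linear_combination -hm
    · rw [ho.neg_one_pow]
      rw [(Odd.add_one ho).neg_pow γ] at hm
      linear_combination -hm
  have hQm' : γ ^ n * ((-1) ^ n * Pm) = (-1) * ((A - γ * B - cm / γ) / γ) := by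
    rw [mul_div_assoc', eq_div_iff hγ]
    linear_combination key
  rw [mul_add, div_mul_div_comm, div_mul_div_comm, hQp, hQm']
  rw [frac_side w A B cm γ ((w ^ 2 - γ ^ 2) * Δ) hγ (mul_ne_zero hD hΔ)]
  rw [frac_rhs _ _ _ _ _ _ h1 h2 hΔ hγ (-1)]
  rw [div_eq_div_iff (by exact mul_ne_zero (pow_ne_zero 2 hγ) (mul_ne_zero hD hΔ))
    (by exact mul_ne_zero (mul_ne_zero (mul_ne_zero (mul_ne_zero two_ne_zero hγ) h1) h2) hΔ)]
  field_simp
  ring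

lemma split3 (cm w a Δ : ℂ) (hw : w ≠ 0) (ha : a ≠ 0) (hΔ : Δ ≠ 0)
    (hwa : w ^ 2 - a ≠ 0) :
    (cm / w) * (1 / ((w ^ 2 - a) * Δ))
      = w * cm / (a * ((w ^ 2 - a) * Δ)) + (cm / w) * (1 / ((0 - a) * Δ)) := by
  have h0a : (0 : ℂ) - a ≠ 0 := by simpa using ha
  field_simp
  ring

theorem chu_partial_fraction_plus_one (n : ℕ) (γ : Fin (n + 1) → ℂ)
    (hγ0 : ∀ k, γ k ≠ 0)
    (hγ : ∀ j k, j ≠ k → γ j ^ 2 ≠ γ k ^ 2)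
    (c : ℤ → ℂ) (w : ℂ) (hw0 : w ≠ 0)
    (hw : ∀ k, w ≠ γ k ∧ w ≠ -γ k) :
    LaurentP c (n + 2) w * w ^ (n + 1) / ∏ k, (w ^ 2 - γ k ^ 2)
      = c ((n : ℤ) + 2) * w + c ((n : ℤ) + 1)
        - (-1) ^ n * c (-(n : ℤ) - 2) / (w * ∏ k, γ k ^ 2) +
        (1 / 2) * ∑ k, γ k ^ n / (∏ j ∈ univ.erase k, (γ k ^ 2 - γ j ^ 2)) *
          (LaurentP c (n + 2) (γ k) / (w - γ k) +
            (-1) ^ n * LaurentP c (n + 2) (-γ k) / (w + γ k)) := by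
  have hγ2 : ∀ k, γ k ^ 2 ≠ 0 := fun k => pow_ne_zero 2 (hγ0 k)
  have hinj : Set.InjOn (fun k => γ k ^ 2) ((univ : Finset (Fin (n + 1))) : Set (Fin (n + 1))) := by
    intro j _ k _ h
    by_contra hne
    exact hγ j k hne h
  have hxne : ∀ k ∈ (univ : Finset (Fin (n + 1))), w ^ 2 ≠ γ k ^ 2 := by
    intro k _ h
    have h1 : (w - γ k) * (w + γ k) = 0 := by linear_combination h
    rcases mul_eq_zero.mp h1 with h2 | h2
    · exact (hw k).1 (by linear_combination h2)
    · exact (hw k).2 (by linear_combination h2)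
  have h0ne : ∀ k ∈ (univ : Finset (Fin (n + 1))), (0 : ℂ) ≠ γ k ^ 2 := by
    intro k _ h
    exact hγ2 k h.symm
  have hcard : (univ : Finset (Fin (n + 1))).card = n + 1 := by simp
  have hΔne : ∀ k : Fin (n + 1), (∏ j ∈ univ.erase k, (γ k ^ 2 - γ j ^ 2)) ≠ 0 := by
    intro k
    rw [Finset.prod_ne_zero_iff]
    intro j hj
    exact sub_ne_zero.mpr (hγ k j (Finset.mem_erase.mp hj).1.symm)
  have hDk : ∀ k : Fin (n + 1), w ^ 2 - γ k ^ 2 ≠ 0 :=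
    fun k => sub_ne_zero.mpr (hxne k (mem_univ k))
  -- partial fraction instances
  have hE := pf_fun univ (fun k => γ k ^ 2) hinj (fun t => c (2 * (t : ℤ) - n - 1)) (w ^ 2) hxne
  have hO := pf_fun univ (fun k => γ k ^ 2) hinj (fun t => c (2 * (t : ℤ) - n)) (w ^ 2) hxne
  have h1D := pf_fun univ (fun k => γ k ^ 2) hinj (fun t => if t = 0 then (1 : ℂ) else 0) (w ^ 2) hxne
  have h1D0 := pf_fun univ (fun k => γ k ^ 2) hinj (fun t => if t = 0 then (1 : ℂ) else 0) 0 h0ne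
  simp only [hcard] at hE hO h1D h1D0
  have hrange : n + 1 + 1 = n + 2 := rfl
  rw [hrange] at hE hO h1D h1D0
  have e1 : 2 * (((n + 1 : ℕ)) : ℤ) - n - 1 = (n : ℤ) + 1 := by push_cast; ring
  have e2 : 2 * (((n + 1 : ℕ)) : ℤ) - n = (n : ℤ) + 2 := by push_cast; ring
  rw [e1] at hE
  rw [e2] at hO
  have hsum1 : ∀ y : ℂ, (∑ t ∈ Finset.range (n + 2), (if t = 0 then (1 : ℂ) else 0) * y ^ t) = 1 := by
    intro y
    rw [Finset.sum_eq_single 0]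
    · simp
    · intro t _ ht; simp [ht]
    · intro h; exact absurd (Finset.mem_range.mpr (by omega)) h
  simp only [hsum1, Nat.succ_ne_zero, if_false, zero_add] at h1D h1D0
  -- numerator decompositions
  have hNw := numer_decomp n c w hw0
  have hwγ : ∀ k : Fin (n + 1), w - γ k ≠ 0 := fun k => sub_ne_zero.mpr (hw k).1
  have hwγ' : ∀ k : Fin (n + 1), w + γ k ≠ 0 := by
    intro k h
    exact (hw k).2 (by linear_combination h)
  have hNp : ∀ k : Fin (n + 1), LaurentP c (n + 2) (γ k) * γ k ^ (n + 1)
      = (∑ t ∈ Finset.range (n + 2), c (2 * (t : ℤ) - n - 1) * (γ k ^ 2) ^ t)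
        + γ k * (∑ t ∈ Finset.range (n + 2), c (2 * (t : ℤ) - n) * (γ k ^ 2) ^ t)
        + c (-(n : ℤ) - 2) / γ k := by
    intro k
    have h := numer_decomp n c (γ k) (hγ0 k)
    exact h
  have hNm : ∀ k : Fin (n + 1), LaurentP c (n + 2) (-γ k) * (-γ k) ^ (n + 1)
      = (∑ t ∈ Finset.range (n + 2), c (2 * (t : ℤ) - n - 1) * (γ k ^ 2) ^ t)
        - γ k * (∑ t ∈ Finset.range (n + 2), c (2 * (t : ℤ) - n) * (γ k ^ 2) ^ t)
        - c (-(n : ℤ) - 2) / γ k := by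
    intro k
    have h := numer_decomp n c (-γ k) (neg_ne_zero.mpr (hγ0 k))
    rw [neg_sq, div_neg] at h
    linear_combination h
  -- step 1 : split the LHS
  have step1 : LaurentP c (n + 2) w * w ^ (n + 1) / ∏ k, (w ^ 2 - γ k ^ 2)
      = (∑ t ∈ Finset.range (n + 2), c (2 * (t : ℤ) - n - 1) * (w ^ 2) ^ t)
            / ∏ k, (w ^ 2 - γ k ^ 2)
        + w * ((∑ t ∈ Finset.range (n + 2), c (2 * (t : ℤ) - n) * (w ^ 2) ^ t)
            / ∏ k, (w ^ 2 - γ k ^ 2))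
        + (c (-(n : ℤ) - 2) / w) * (1 / ∏ k, (w ^ 2 - γ k ^ 2)) := by
    rw [hNw]
    ring
  rw [step1, hE, hO, h1D]
  -- split the 1/x part
  have hsplit : (c (-(n : ℤ) - 2) / w) * (∑ k, 1 / ((w ^ 2 - γ k ^ 2)
        * ∏ j ∈ univ.erase k, (γ k ^ 2 - γ j ^ 2)))
      = (∑ k, w * c (-(n : ℤ) - 2) / (γ k ^ 2 * ((w ^ 2 - γ k ^ 2)
          * ∏ j ∈ univ.erase k, (γ k ^ 2 - γ j ^ 2))))
        + (c (-(n : ℤ) - 2) / w) * (∑ k, 1 / ((0 - γ k ^ 2)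
          * ∏ j ∈ univ.erase k, (γ k ^ 2 - γ j ^ 2))) := by
    rw [Finset.mul_sum, Finset.mul_sum, ← Finset.sum_add_distrib]
    exact Finset.sum_congr rfl fun k _ =>
      split3 _ w (γ k ^ 2) _ hw0 (hγ2 k) (hΔne k) (hDk k)
  rw [hsplit, ← h1D0]
  have hQne : (∏ k, γ k ^ 2) ≠ 0 := Finset.prod_ne_zero_iff.mpr fun k _ => hγ2 k
  have hD0v : (∏ k, ((0 : ℂ) - γ k ^ 2)) = (-1) ^ (n + 1) * ∏ k, γ k ^ 2 := by
    rw [Finset.prod_congr rfl (fun k _ => show (0 : ℂ) - γ k ^ 2 = -1 * γ k ^ 2 by ring),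
      Finset.prod_mul_distrib, Finset.prod_const, hcard]
  have hcterm : (c (-(n : ℤ) - 2) / w) * (1 / ((-1) ^ (n + 1) * ∏ k, γ k ^ 2))
      = -((-1) ^ n * c (-(n : ℤ) - 2) / (w * ∏ k, γ k ^ 2)) := by
    rcases Nat.even_or_odd n with he | ho
    · rw [he.neg_one_pow, (Even.add_one he).neg_one_pow]
      rw [neg_one_mul, one_mul, one_div, inv_neg, mul_neg, ← div_eq_mul_inv, div_div]
    · rw [ho.neg_one_pow, (Odd.add_one ho).neg_one_pow]
      rw [one_mul, one_div, ← div_eq_mul_inv, div_div, neg_one_mul, neg_div, neg_neg]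
  rw [hD0v, hcterm]
  -- the per-index identity
  have hsums : (∑ k, (∑ t ∈ Finset.range (n + 2), c (2 * (t : ℤ) - n - 1) * (γ k ^ 2) ^ t)
          / ((w ^ 2 - γ k ^ 2) * ∏ j ∈ univ.erase k, (γ k ^ 2 - γ j ^ 2)))
      + w * (∑ k, (∑ t ∈ Finset.range (n + 2), c (2 * (t : ℤ) - n) * (γ k ^ 2) ^ t)
          / ((w ^ 2 - γ k ^ 2) * ∏ j ∈ univ.erase k, (γ k ^ 2 - γ j ^ 2)))
      + (∑ k, w * c (-(n : ℤ) - 2) / (γ k ^ 2 * ((w ^ 2 - γ k ^ 2)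
          * ∏ j ∈ univ.erase k, (γ k ^ 2 - γ j ^ 2))))
      = (1 / 2) * ∑ k, γ k ^ n / (∏ j ∈ univ.erase k, (γ k ^ 2 - γ j ^ 2)) *
          (LaurentP c (n + 2) (γ k) / (w - γ k) +
            (-1) ^ n * LaurentP c (n + 2) (-γ k) / (w + γ k)) := by
    rw [Finset.mul_sum, Finset.mul_sum, ← Finset.sum_add_distrib, ← Finset.sum_add_distrib]
    refine Finset.sum_congr rfl fun k _ => ?_
    have h := perk n (γ k) w
      (∑ t ∈ Finset.range (n + 2), c (2 * (t : ℤ) - n - 1) * (γ k ^ 2) ^ t)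
      (∑ t ∈ Finset.range (n + 2), c (2 * (t : ℤ) - n) * (γ k ^ 2) ^ t)
      (c (-(n : ℤ) - 2))
      (∏ j ∈ univ.erase k, (γ k ^ 2 - γ j ^ 2))
      (LaurentP c (n + 2) (γ k)) (LaurentP c (n + 2) (-γ k))
      (hγ0 k) (hwγ k) (hwγ' k) (hΔne k) (hNp k) (hNm k)
    rw [← h]
    ring
  linear_combination hsums
end

section
/- Let γ_0,…,γ_n be nonzero complex numbers with γ_k² pairwise distinct, and P(w) = Σ_{m=−n−2}^{n+2} c_m w^m. Then c_{n+2} Σ_{k=0}^{n} γ_k² + c_n = −(−1)^n c_{−n−2}/∏_{k=0}^{n} γ_k² + (1/2) Σ_{k=0}^{n} γ_k^n (P(γ_k) + (−1)^n P(−γ_k)) / ∏_{j≠k}(γ_k²−γ_j²). -/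
open Finset

open Polynomial

/-- Leading-coefficient extraction from Lagrange interpolation. -/
lemma coeff_eq_sum_div (n : ℕ) (x : Fin (n + 1) → ℂ) (hx : Function.Injective x)
    (p : Polynomial ℂ) (hp : p.degree < ((n + 1 : ℕ) : WithBot ℕ)) :
    p.coeff n = ∑ k, p.eval (x k) / ∏ j ∈ univ.erase k, (x k - x j) := by
  have hinj : Set.InjOn x ↑(univ : Finset (Fin (n + 1))) := hx.injOn
  have hcard : #(univ : Finset (Fin (n + 1))) = n + 1 := by simp
  have hdeg : p.degree < (#(univ : Finset (Fin (n + 1))) : ℕ) := by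
    rw [hcard]; exact hp
  have hb : ∀ k : Fin (n + 1),
      (Lagrange.basis univ x k).coeff n = (∏ j ∈ univ.erase k, (x k - x j))⁻¹ := by
    intro k
    have hnd : (Lagrange.basis univ x k).natDegree = n := by
      rw [Lagrange.natDegree_basis hinj (mem_univ k), hcard]
      omega
    have hlead : (Lagrange.basis univ x k).leadingCoeff
        = ∏ j ∈ univ.erase k, (x k - x j)⁻¹ := by
      rw [Lagrange.basis, leadingCoeff_prod]
      refine Finset.prod_congr rfl fun j hj => ?_
      rw [Lagrange.basisDivisor, leadingCoeff_mul, leadingCoeff_C,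
        (monic_X_sub_C (x j)).leadingCoeff, mul_one]
    have hco : (Lagrange.basis univ x k).coeff n = (Lagrange.basis univ x k).leadingCoeff := by
      rw [Polynomial.leadingCoeff, hnd]
    rw [hco, hlead, ← Finset.prod_inv_distrib]
  have hinterp := Lagrange.eq_interpolate hinj hdeg
  calc p.coeff n
      = (Lagrange.interpolate univ x fun i => p.eval (x i)).coeff n := by rw [← hinterp]
    _ = ∑ k, (Polynomial.C (p.eval (x k)) * Lagrange.basis univ x k).coeff n := by
        rw [Lagrange.interpolate_apply, Polynomial.finset_sum_coeff]
    _ = ∑ k, p.eval (x k) / ∏ j ∈ univ.erase k, (x k - x j) := by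
        refine Finset.sum_congr rfl fun k _ => ?_
        rw [Polynomial.coeff_C_mul, hb k, div_eq_mul_inv]

lemma D_low (n : ℕ) (x : Fin (n + 1) → ℂ) (hx : Function.Injective x) (t : ℕ) (ht : t < n) :
    ∑ k, x k ^ t / ∏ j ∈ univ.erase k, (x k - x j) = 0 := by
  have h := coeff_eq_sum_div n x hx (Polynomial.X ^ t)
    (by rw [Polynomial.degree_X_pow]; exact_mod_cast Nat.lt_succ_of_lt ht)
  simpa [Polynomial.coeff_X_pow, ht.ne'] using h.symm

lemma D_n (n : ℕ) (x : Fin (n + 1) → ℂ) (hx : Function.Injective x) :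
    ∑ k, x k ^ n / ∏ j ∈ univ.erase k, (x k - x j) = 1 := by
  have h := coeff_eq_sum_div n x hx (Polynomial.X ^ n)
    (by rw [Polynomial.degree_X_pow]; exact_mod_cast Nat.lt_succ_self n)
  simpa [Polynomial.coeff_X_pow] using h.symm

lemma D_top (n : ℕ) (x : Fin (n + 1) → ℂ) (hx : Function.Injective x) :
    ∑ k, x k ^ (n + 1) / ∏ j ∈ univ.erase k, (x k - x j) = ∑ k, x k := by
  set q : Polynomial ℂ := ∏ j : Fin (n + 1), (Polynomial.X - Polynomial.C (x j)) with hq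
  have hqmonic : q.Monic := monic_prod_of_monic _ _ fun j _ => monic_X_sub_C (x j)
  have hqdeg : q.natDegree = n + 1 := by
    rw [hq, natDegree_prod_of_monic _ _ fun j _ => monic_X_sub_C (x j)]
    simp
  have hdeg : (Polynomial.X ^ (n + 1) - q).degree < ((n + 1 : ℕ) : WithBot ℕ) := by
    have h2 : q.degree = ((n + 1 : ℕ) : WithBot ℕ) := by
      rw [Polynomial.degree_eq_natDegree hqmonic.ne_zero, hqdeg]
    have := Polynomial.degree_sub_lt
      (p := (Polynomial.X : Polynomial ℂ) ^ (n + 1)) (q := q)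
      (by rw [Polynomial.degree_X_pow, h2]) (pow_ne_zero _ Polynomial.X_ne_zero)
      (by rw [Polynomial.leadingCoeff_X_pow, hqmonic.leadingCoeff])
    rwa [Polynomial.degree_X_pow] at this
  have hp := coeff_eq_sum_div n x hx (Polynomial.X ^ (n + 1) - q) hdeg
  have heval : ∀ k, (Polynomial.X ^ (n + 1) - q).eval (x k) = x k ^ (n + 1) := by
    intro k
    have : q.eval (x k) = 0 := by
      rw [hq, Polynomial.eval_prod]
      exact Finset.prod_eq_zero (mem_univ k) (by simp)
    simp [this]
  have hcoeff : (Polynomial.X ^ (n + 1) - q).coeff n = ∑ k, x k := by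
    have h1 : q.coeff n = -∑ k, x k := by
      have := Polynomial.prod_X_sub_C_coeff_card_pred (univ : Finset (Fin (n + 1))) x
        (by simp)
      simpa using this
    rw [Polynomial.coeff_sub, Polynomial.coeff_X_pow, h1]
    simp
  rw [← hcoeff, hp]
  exact Finset.sum_congr rfl fun k _ => by rw [heval]

lemma D_neg (n : ℕ) (x : Fin (n + 1) → ℂ) (hx : Function.Injective x)
    (hx0 : ∀ k, x k ≠ 0) :
    ∑ k, (x k)⁻¹ / ∏ j ∈ univ.erase k, (x k - x j) = (-1) ^ n / ∏ k, x k := by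
  set q : Polynomial ℂ := ∏ j : Fin (n + 1), (Polynomial.X - Polynomial.C (x j)) with hq
  have hqmonic : q.Monic := monic_prod_of_monic _ _ fun j _ => monic_X_sub_C (x j)
  have hqdeg : q.natDegree = n + 1 := by
    rw [hq, natDegree_prod_of_monic _ _ fun j _ => monic_X_sub_C (x j)]
    simp
  set q0 : ℂ := q.eval 0 with hq0
  have hq0val : q0 = (-1) ^ (n + 1) * ∏ k, x k := by
    rw [hq0, hq, Polynomial.eval_prod]
    simp only [Polynomial.eval_sub, Polynomial.eval_X, Polynomial.eval_C, zero_sub]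
    calc ∏ j : Fin (n + 1), -x j = ∏ j : Fin (n + 1), (-1 : ℂ) * x j := by
          refine Finset.prod_congr rfl fun j _ => by ring
      _ = (∏ _j : Fin (n + 1), (-1 : ℂ)) * ∏ j : Fin (n + 1), x j :=
          Finset.prod_mul_distrib
      _ = (-1) ^ (n + 1) * ∏ k : Fin (n + 1), x k := by
          rw [Finset.prod_const]
          simp
  have hq0ne : q0 ≠ 0 := by
    rw [hq0val]
    exact mul_ne_zero (pow_ne_zero _ (by norm_num))
      (Finset.prod_ne_zero_iff.mpr fun k _ => hx0 k)
  set r : Polynomial ℂ := q - Polynomial.C q0 with hr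
  have hXdvd : Polynomial.X ∣ r := by
    rw [Polynomial.X_dvd_iff, hr, Polynomial.coeff_sub, Polynomial.coeff_C_zero,
      Polynomial.coeff_zero_eq_eval_zero, ← hq0, sub_self]
  obtain ⟨p, hpX⟩ := hXdvd
  have heval : ∀ k, p.eval (x k) = -q0 * (x k)⁻¹ := by
    intro k
    have h1 : r.eval (x k) = x k * p.eval (x k) := by
      rw [hpX]; simp
    have h2 : r.eval (x k) = -q0 := by
      have : q.eval (x k) = 0 := by
        rw [hq, Polynomial.eval_prod]
        exact Finset.prod_eq_zero (mem_univ k) (by simp)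
      rw [hr]; simp [this]
    have h3 : x k * p.eval (x k) = -q0 := by rw [← h1]; exact h2
    rw [eq_mul_inv_iff_mul_eq₀ (hx0 k)]
    linear_combination h3
  have hrdeg : r.degree ≤ ((n + 1 : ℕ) : WithBot ℕ) := by
    rw [hr]
    refine le_trans (Polynomial.degree_sub_le _ _) (max_le ?_ ?_)
    · rw [Polynomial.degree_eq_natDegree hqmonic.ne_zero, hqdeg]
    · exact le_trans Polynomial.degree_C_le (by exact_mod_cast Nat.zero_le (n + 1))
  have hpdeg : p.degree < ((n + 1 : ℕ) : WithBot ℕ) := by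
    by_cases hp0 : p = 0
    · rw [hp0, Polynomial.degree_zero]; exact WithBot.bot_lt_coe _
    · have hdr : r.degree = 1 + p.degree := by
        rw [hpX, Polynomial.degree_mul, Polynomial.degree_X]
      rw [hdr, Polynomial.degree_eq_natDegree hp0] at hrdeg
      rw [Polynomial.degree_eq_natDegree hp0]
      have h4 : 1 + p.natDegree ≤ n + 1 := by exact_mod_cast hrdeg
      exact_mod_cast (by omega : p.natDegree < n + 1)
  have hpcoeff : p.coeff n = 1 := by
    have h1 : r.coeff (n + 1) = p.coeff n := by
      rw [hpX, Polynomial.coeff_X_mul]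
    have h2 : r.coeff (n + 1) = 1 := by
      rw [hr, Polynomial.coeff_sub, Polynomial.coeff_C,
        if_neg (by omega : ¬(n + 1 = 0)), sub_zero]
      have := hqmonic.coeff_natDegree
      rwa [hqdeg] at this
    rw [← h1, h2]
  have hsum := coeff_eq_sum_div n x hx p hpdeg
  rw [hpcoeff] at hsum
  have hsum2 : (1 : ℂ) = -q0 * ∑ k, (x k)⁻¹ / ∏ j ∈ univ.erase k, (x k - x j) := by
    rw [hsum, Finset.mul_sum]
    refine Finset.sum_congr rfl fun k _ => ?_
    rw [heval k]
    ring
  have hfinal : ∑ k, (x k)⁻¹ / ∏ j ∈ univ.erase k, (x k - x j) = -q0⁻¹ := by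
    have h5 : -q0 * (∑ k, (x k)⁻¹ / ∏ j ∈ univ.erase k, (x k - x j)) = 1 := hsum2.symm
    have h6 := eq_inv_of_mul_eq_one_right h5
    rw [h6, inv_neg]
  rw [hfinal, hq0val]
  have hinv : ((-1 : ℂ) ^ n)⁻¹ = (-1 : ℂ) ^ n :=
    inv_eq_of_mul_eq_one_right (by rw [← pow_add, ← two_mul, pow_mul]; norm_num)
  rw [pow_succ,
    show ((-1 : ℂ) ^ n * -1 * ∏ k, x k) = -((-1) ^ n * ∏ k, x k) by ring,
    inv_neg, neg_neg, mul_inv, hinv, div_eq_mul_inv]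

theorem residue_sum_identity (n : ℕ) (γ : Fin (n + 1) → ℂ)
    (hγ0 : ∀ k, γ k ≠ 0)
    (hγ : ∀ j k, j ≠ k → γ j ^ 2 ≠ γ k ^ 2)
    (c : ℤ → ℂ) :
    c ((n : ℤ) + 2) * ∑ k, γ k ^ 2 + c (n : ℤ)
      = -((-1) ^ n * c (-(n : ℤ) - 2) / ∏ k, γ k ^ 2) +
        (1 / 2) * ∑ k, γ k ^ n *
          (LaurentP c (n + 2) (γ k) + (-1) ^ n * LaurentP c (n + 2) (-γ k)) /
          ∏ j ∈ univ.erase k, (γ k ^ 2 - γ j ^ 2) := by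
  classical
  set x : Fin (n + 1) → ℂ := fun k => γ k ^ 2 with hxdef
  have hxk : ∀ k, γ k ^ 2 = x k := fun k => rfl
  have hx : Function.Injective x := by
    intro j k h
    by_contra hne
    exact hγ j k hne h
  have hx0 : ∀ k, x k ≠ 0 := fun k => pow_ne_zero _ (hγ0 k)
  set T : Finset ℤ := Finset.Icc (-1 : ℤ) ((n : ℤ) + 1) with hT
  -- Key pointwise identity
  have key : ∀ k, γ k ^ n *
      (LaurentP c (n + 2) (γ k) + (-1) ^ n * LaurentP c (n + 2) (-γ k))
      = 2 * ∑ t ∈ T, c (2 * t - n) * x k ^ t := by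
    intro k
    have hgne : γ k ≠ 0 := hγ0 k
    have hc2 : ((n + 2 : ℕ) : ℤ) = (n : ℤ) + 2 := by push_cast; ring
    have expand : γ k ^ n *
        (LaurentP c (n + 2) (γ k) + (-1) ^ n * LaurentP c (n + 2) (-γ k))
        = ∑ m ∈ Finset.Icc (-((n : ℤ) + 2)) ((n : ℤ) + 2),
            c m * (γ k ^ ((n : ℤ) + m) * (1 + (-1 : ℂ) ^ ((n : ℤ) + m))) := by
      rw [LaurentP, LaurentP]
      simp only [hc2, Finset.mul_sum, mul_add, ← Finset.sum_add_distrib]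
      refine Finset.sum_congr rfl fun m _ => ?_
      have h1 : (-γ k) ^ m = (-1 : ℂ) ^ m * γ k ^ m := by
        rw [show -γ k = (-1 : ℂ) * γ k by ring, mul_zpow]
      have h2 : γ k ^ ((n : ℤ) + m) = γ k ^ n * γ k ^ m := by
        rw [zpow_add₀ hgne, zpow_natCast]
      have h3 : (-1 : ℂ) ^ ((n : ℤ) + m) = (-1 : ℂ) ^ n * (-1 : ℂ) ^ m := by
        rw [zpow_add₀ (by norm_num : (-1 : ℂ) ≠ 0), zpow_natCast]
      rw [h1, h2, h3]
      ring
    rw [expand]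
    -- reindex via t ↦ 2t - n
    have himg : T.image (fun t : ℤ => 2 * t - (n : ℤ)) ⊆ Finset.Icc (-((n : ℤ) + 2)) ((n : ℤ) + 2) := by
      intro m hm
      rw [Finset.mem_image] at hm
      obtain ⟨t, ht, rfl⟩ := hm
      rw [hT, Finset.mem_Icc] at ht
      rw [Finset.mem_Icc]
      omega
    have hz : ∀ m ∈ Finset.Icc (-((n : ℤ) + 2)) ((n : ℤ) + 2),
        m ∉ T.image (fun t : ℤ => 2 * t - (n : ℤ)) →
        c m * (γ k ^ ((n : ℤ) + m) * (1 + (-1 : ℂ) ^ ((n : ℤ) + m))) = 0 := by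
      intro m hm hnot
      have hodd : Odd ((n : ℤ) + m) := by
        rcases Int.even_or_odd ((n : ℤ) + m) with he | ho
        · exfalso
          obtain ⟨t, ht⟩ := he
          refine hnot ?_
          rw [Finset.mem_image]
          rw [Finset.mem_Icc] at hm
          exact ⟨t, by rw [hT, Finset.mem_Icc]; omega, by omega⟩
        · exact ho
      rw [hodd.neg_one_zpow]
      norm_num
    have hinj2 : ∀ a ∈ T, ∀ b ∈ T, 2 * a - (n : ℤ) = 2 * b - n → a = b := by
      intro a _ b _ h; omega
    rw [← Finset.sum_subset himg (fun m hm hnm => hz m hm hnm),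
      Finset.sum_image hinj2, Finset.mul_sum]
    refine Finset.sum_congr rfl fun t _ => ?_
    have hn2t : (n : ℤ) + (2 * t - n) = 2 * t := by ring
    have hg2t : γ k ^ (2 * t : ℤ) = x k ^ t := by
      rw [hxdef]
      show γ k ^ (2 * t : ℤ) = (γ k ^ 2) ^ t
      rw [sq, mul_zpow, ← zpow_add₀ hgne, two_mul]
    have heven : (-1 : ℂ) ^ (2 * t : ℤ) = 1 := Even.neg_one_zpow ⟨t, by ring⟩
    rw [hn2t, hg2t, heven]
    ring
  simp only [hxk]
  have main : (1 / 2 : ℂ) * ∑ k, γ k ^ n *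
      (LaurentP c (n + 2) (γ k) + (-1) ^ n * LaurentP c (n + 2) (-γ k)) /
      ∏ j ∈ univ.erase k, (x k - x j)
      = c (-(n : ℤ) - 2) * ((-1) ^ n / ∏ k, x k) + c (n : ℤ) * 1
        + c ((n : ℤ) + 2) * ∑ k, x k := by
    calc (1 / 2 : ℂ) * ∑ k, γ k ^ n *
        (LaurentP c (n + 2) (γ k) + (-1) ^ n * LaurentP c (n + 2) (-γ k)) /
        ∏ j ∈ univ.erase k, (x k - x j)
        = (1 / 2 : ℂ) * ∑ k, (2 * ∑ t ∈ T, c (2 * t - n) * x k ^ t) /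
            ∏ j ∈ univ.erase k, (x k - x j) := by
          refine congrArg _ (Finset.sum_congr rfl fun k _ => ?_)
          rw [key k]
      _ = ∑ k, (∑ t ∈ T, c (2 * t - n) * x k ^ t) / ∏ j ∈ univ.erase k, (x k - x j) := by
          rw [Finset.mul_sum]
          refine Finset.sum_congr rfl fun k _ => ?_
          ring
      _ = ∑ t ∈ T, c (2 * t - n) * ∑ k, x k ^ t / ∏ j ∈ univ.erase k, (x k - x j) := by
          simp only [Finset.sum_div]
          rw [Finset.sum_comm]
          refine Finset.sum_congr rfl fun t _ => ?_
          rw [Finset.mul_sum]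
          refine Finset.sum_congr rfl fun k _ => ?_
          ring
      _ = c (-(n : ℤ) - 2) * ((-1) ^ n / ∏ k, x k) + c (n : ℤ) * 1
          + c ((n : ℤ) + 2) * ∑ k, x k := by
          have hsplit : T = insert (-1 : ℤ) (insert ((n : ℤ) + 1)
              (insert (n : ℤ) (Finset.Icc (0 : ℤ) ((n : ℤ) - 1)))) := by
            rw [hT]
            ext t
            simp only [Finset.mem_Icc, Finset.mem_insert]
            omega
          have h1 : (-1 : ℤ) ∉ insert ((n : ℤ) + 1)
              (insert (n : ℤ) (Finset.Icc (0 : ℤ) ((n : ℤ) - 1))) := by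
            simp only [Finset.mem_insert, Finset.mem_Icc]
            omega
          have h2 : ((n : ℤ) + 1) ∉ insert (n : ℤ) (Finset.Icc (0 : ℤ) ((n : ℤ) - 1)) := by
            simp only [Finset.mem_insert, Finset.mem_Icc]
            omega
          have h3 : (n : ℤ) ∉ Finset.Icc (0 : ℤ) ((n : ℤ) - 1) := by
            simp only [Finset.mem_Icc]
            omega
          rw [hsplit, Finset.sum_insert h1, Finset.sum_insert h2, Finset.sum_insert h3]
          have hD1 : ∑ k, x k ^ (-1 : ℤ) / ∏ j ∈ univ.erase k, (x k - x j)
              = (-1) ^ n / ∏ k, x k := by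
            simp only [zpow_neg_one]
            exact D_neg n x hx hx0
          have hDn : ∑ k, x k ^ ((n : ℤ)) / ∏ j ∈ univ.erase k, (x k - x j) = 1 := by
            simp only [zpow_natCast]
            exact D_n n x hx
          have hDtop : ∑ k, x k ^ ((n : ℤ) + 1) / ∏ j ∈ univ.erase k, (x k - x j)
              = ∑ k, x k := by
            have hcast : ((n : ℤ) + 1) = ((n + 1 : ℕ) : ℤ) := by push_cast; ring
            simp only [hcast, zpow_natCast]
            exact D_top n x hx
          have hrest : ∑ t ∈ Finset.Icc (0 : ℤ) ((n : ℤ) - 1),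
              c (2 * t - n) * ∑ k, x k ^ t / ∏ j ∈ univ.erase k, (x k - x j) = 0 := by
            refine Finset.sum_eq_zero fun t ht => ?_
            rw [Finset.mem_Icc] at ht
            have htn : (t.toNat : ℤ) = t := Int.toNat_of_nonneg ht.1
            have hlt : t.toNat < n := by omega
            have : ∑ k, x k ^ t / ∏ j ∈ univ.erase k, (x k - x j) = 0 := by
              calc ∑ k, x k ^ t / ∏ j ∈ univ.erase k, (x k - x j)
                  = ∑ k, x k ^ t.toNat / ∏ j ∈ univ.erase k, (x k - x j) := by
                    refine Finset.sum_congr rfl fun k _ => ?_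
                    rw [show x k ^ t = (x k ^ t.toNat : ℂ) from by rw [← zpow_natCast, htn]]
                _ = 0 := D_low n x hx t.toNat hlt
            rw [this, mul_zero]
          rw [hD1, hDn, hDtop, hrest,
            show (2 * (-1 : ℤ) - n) = -(n : ℤ) - 2 by ring,
            show (2 * ((n : ℤ) + 1) - n) = (n : ℤ) + 2 by ring,
            show (2 * (n : ℤ) - n) = (n : ℤ) by ring]
          ring
  rw [main]
  ring
end

section
/- Let γ_0,…,γ_n be nonzero complex numbers with γ_k² pairwise distinct and P(w) = Σ_{m=−n−4}^{n+4} c_m w^m. Then c_n + c_{n+2} Σ_{k=0}^n γ_k² + c_{n+4}( Σ_{k=0}^n γ_k⁴ + Σ_{0≤j<k≤n} γ_j²γ_k² ) = (c_{−n−2} + c_{−n−4} Σ_{j=0}^n γ_j^{−2}) (−1)^{n+1} / ∏_{k=0}^n γ_k² + (1/2) Σ_{k=0}^{n} γ_k^n (P(γ_k) + (−1)^n P(−γ_k)) / ∏_{j≠k}(γ_k²−γ_j²). -/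
open Finset

/-!
Put `x_k = γ_k²`. Only the monomials of `P` of the parity of `n` survive in
`γ^n (P(γ) + (-1)^n P(-γ))`, which is a Laurent polynomial in `γ²`, so the residue sum is the
divided difference `D f = ∑_k f(x_k) / ∏_{j ≠ k} (x_k - x_j)` of `z ↦ ∑_t c_{2t-n} z^t`.
By Lagrange interpolation `D` reads off the coefficient of `z^n` of a polynomial of degree `≤ n`,
so `D(z^m) = 0` for `0 ≤ m < n` and `D(z^n) = 1`; reducing `z^{n+1}` and `z^{n+2}` modulo the
nodal polynomial gives `e₁` and `h₂ = e₁² - e₂`. The inversion `z ↦ 1/z` of the nodes turns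
`D(z^{-1})` and `D(z^{-2})` into `D(z^n)` and `D(z^{n+1})` for the reciprocal nodes.
-/

open Polynomial

theorem sq_sum_eq_sum_sq_add_two_mul_sum_offDiag_lt {ι R : Type*} [LinearOrder ι] [CommRing R]
    (s : Finset ι) (f : ι → R) :
    (∑ i ∈ s, f i) ^ 2 =
      ∑ i ∈ s, f i ^ 2 + 2 * ∑ p ∈ s.offDiag with p.1 < p.2, f p.1 * f p.2 := by
  have h := (QuadraticMap.sq : QuadraticMap R R R).map_sum s f
  rw [sum_sym2_filter_not_isDiag] at h
  simp only [QuadraticMap.sq_apply, Sym2.map_mk, QuadraticMap.polarSym2_sym2Mk,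
    QuadraticMap.polar] at h
  rw [sq, h, mul_sum]
  congr 1
  · exact sum_congr rfl fun _ _ => (sq _).symm
  · exact sum_congr rfl fun _ _ => by ring

theorem sum_powersetCard_two {ι M : Type*} [LinearOrder ι] [AddCommMonoid M]
    (s : Finset ι) (g : Finset ι → M) :
    ∑ t ∈ s.powersetCard 2, g t = ∑ p ∈ s.offDiag with p.1 < p.2, g {p.1, p.2} := by
  symm
  refine sum_bij (fun p _ => {p.1, p.2}) ?_ ?_ ?_ (fun _ _ => rfl)
  · intro p hp
    simp only [mem_filter, mem_offDiag] at hp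
    simp [mem_powersetCard, insert_subset_iff, hp, card_pair hp.1.2.2]
  · rintro ⟨a, b⟩ hab ⟨c, d⟩ hcd h
    simp only [mem_filter, mem_offDiag] at hab hcd
    have := congrArg (fun t : Finset ι => (t : Set ι)) h
    simp only [coe_insert, coe_singleton, Set.pair_eq_pair_iff] at this
    grind
  · intro t ht
    obtain ⟨hsub, hcard⟩ := mem_powersetCard.mp ht
    obtain ⟨a, b, hab, rfl⟩ := card_eq_two.mp hcard
    rcases hab.lt_or_gt with h | h
    · exact ⟨(a, b), by simp_all [insert_subset_iff], rfl⟩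
    · exact ⟨(b, a), by simp_all [insert_subset_iff, h.ne], pair_comm _ _⟩

theorem sq_sum_sub_sum_powersetCard_two {ι R : Type*} [LinearOrder ι] [CommRing R]
    (s : Finset ι) (f : ι → R) :
    (∑ i ∈ s, f i) ^ 2 - ∑ t ∈ s.powersetCard 2, ∏ i ∈ t, f i =
      ∑ i ∈ s, f i ^ 2 + ∑ p ∈ s.offDiag with p.1 < p.2, f p.1 * f p.2 := by
  have hpair : ∑ p ∈ s.offDiag with p.1 < p.2, ∏ i ∈ {p.1, p.2}, f i =
      ∑ p ∈ s.offDiag with p.1 < p.2, f p.1 * f p.2 :=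
    sum_congr rfl fun p hp => prod_pair (mem_filter.1 hp).2.ne
  rw [sq_sum_eq_sum_sq_add_two_mul_sum_offDiag_lt, sum_powersetCard_two, hpair]
  ring

section Nodal

variable {R ι : Type*} [CommRing R] {s : Finset ι} {v : ι → R} {n : ℕ}

theorem coeff_nodal_of_card_eq (hs : #s = n + 1) :
    (Lagrange.nodal s v).coeff n = -∑ i ∈ s, v i := by
  simpa [hs, Lagrange.nodal_eq] using
    prod_X_sub_C_coeff_card_pred s v (by rw [hs]; exact n.succ_pos)

theorem coeff_X_mul_nodal_of_card_eq (hs : #s = n + 1) :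
    (X * Lagrange.nodal s v).coeff n = ∑ t ∈ s.powersetCard 2, ∏ i ∈ t, v i := by
  cases n with
  | zero =>
    rw [coeff_X_mul_zero, powersetCard_eq_empty.2 (by omega), sum_empty]
  | succ k =>
    have hnodal : Lagrange.nodal s v = ∏ i ∈ s, (X + C (-v i)) := by
      simp [Lagrange.nodal_eq, sub_eq_add_neg]
    rw [coeff_X_mul, hnodal, prod_X_add_C_coeff s _ (by omega), show #s - k = 2 by omega]
    refine sum_congr rfl fun t ht => ?_
    rw [prod_neg, (mem_powersetCard.1 ht).2]
    simp

theorem natDegree_sub_C_mul_nodal_le [Nontrivial R] (hs : #s = n + 1) {P : R[X]}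
    (hP : P.natDegree ≤ n + 1) :
    (P - C (P.coeff (n + 1)) * Lagrange.nodal s v).natDegree ≤ n := by
  have hQ : (Lagrange.nodal s v).natDegree = n + 1 := by rw [Lagrange.natDegree_nodal, hs]
  refine natDegree_le_iff_coeff_eq_zero.2 fun m hm => ?_
  rw [coeff_sub, coeff_C_mul]
  obtain rfl | hm' := (show n + 1 ≤ m from hm).eq_or_lt
  · rw [← hQ, Lagrange.nodal_monic.coeff_natDegree, hQ, mul_one, sub_self]
  · have hQm : (Lagrange.nodal s v).natDegree < m := hQ ▸ hm'
    rw [coeff_eq_zero_of_natDegree_lt (hP.trans_lt hm'), coeff_eq_zero_of_natDegree_lt hQm,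
      mul_zero, sub_zero]

end Nodal

section DividedDifference

variable {F ι : Type*} [Field F] [DecidableEq ι] {s : Finset ι} {v : ι → F} {n : ℕ}

def divDiff (s : Finset ι) (v : ι → F) (f : F → F) : F :=
  ∑ i ∈ s, f (v i) / ∏ j ∈ s.erase i, (v i - v j)

theorem divDiff_congr {f g : F → F} (h : ∀ i ∈ s, f (v i) = g (v i)) :
    divDiff s v f = divDiff s v g :=
  sum_congr rfl fun i hi => by rw [h i hi]

theorem divDiff_sum_mul {κ : Type*} (T : Finset κ) (a : κ → F) (f : κ → F → F) :
    divDiff s v (fun z => ∑ t ∈ T, a t * f t z) = ∑ t ∈ T, a t * divDiff s v (f t) := by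
  simp only [divDiff, sum_div, mul_sum, mul_div_assoc]
  exact sum_comm

theorem divDiff_eval_of_natDegree_le (hvs : Set.InjOn v s) (hs : #s = n + 1) {P : F[X]}
    (hP : P.natDegree ≤ n) : divDiff s v P.eval = P.coeff n := by
  have hdeg : P.degree < #s := by
    rw [hs]
    exact (natDegree_le_iff_degree_le.1 hP).trans_lt (by exact_mod_cast n.lt_succ_self)
  rw [divDiff, ← Lagrange.coeff_eq_sum hvs hdeg, hs, Nat.add_sub_cancel]

theorem divDiff_eval_of_natDegree_le_succ (hvs : Set.InjOn v s) (hs : #s = n + 1) {P : F[X]}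
    (hP : P.natDegree ≤ n + 1) :
    divDiff s v P.eval = P.coeff n + P.coeff (n + 1) * ∑ i ∈ s, v i := by
  have hnodes : divDiff s v P.eval
      = divDiff s v (P - C (P.coeff (n + 1)) * Lagrange.nodal s v).eval :=
    divDiff_congr fun i hi => by simp [Lagrange.eval_nodal_at_node hi]
  rw [hnodes, divDiff_eval_of_natDegree_le hvs hs (natDegree_sub_C_mul_nodal_le hs hP),
    coeff_sub, coeff_C_mul, coeff_nodal_of_card_eq hs]
  ring

theorem divDiff_pow_of_lt (hvs : Set.InjOn v s) (hs : #s = n + 1) {m : ℕ} (hm : m < n) :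
    divDiff s v (· ^ m) = 0 := by
  simpa [coeff_X_pow, hm.ne'] using
    divDiff_eval_of_natDegree_le hvs hs (P := X ^ m) (by simpa using hm.le)

theorem divDiff_pow_self (hvs : Set.InjOn v s) (hs : #s = n + 1) :
    divDiff s v (· ^ n) = 1 := by
  simpa using divDiff_eval_of_natDegree_le hvs hs (P := X ^ n) (by simp)

theorem divDiff_pow_succ (hvs : Set.InjOn v s) (hs : #s = n + 1) :
    divDiff s v (· ^ (n + 1)) = ∑ i ∈ s, v i := by
  simpa using divDiff_eval_of_natDegree_le_succ hvs hs (P := X ^ (n + 1)) (by simp)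

theorem divDiff_pow_add_two (hvs : Set.InjOn v s) (hs : #s = n + 1) :
    divDiff s v (· ^ (n + 2)) = (∑ i ∈ s, v i) ^ 2 - ∑ t ∈ s.powersetCard 2, ∏ i ∈ t, v i := by
  set P := X * (X ^ (n + 1) - Lagrange.nodal s v)
  have hP : P.natDegree ≤ n + 1 := by
    have h := natDegree_sub_C_mul_nodal_le hs (P := X ^ (n + 1)) (v := v) (by simp)
    simp only [coeff_X_pow_self, map_one, one_mul] at h
    calc P.natDegree ≤ (X : F[X]).natDegree + (X ^ (n + 1) - Lagrange.nodal s v).natDegree :=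
          natDegree_mul_le
      _ ≤ n + 1 := by linarith [natDegree_X_le (R := F)]
  have hPv : divDiff s v (· ^ (n + 2)) = divDiff s v P.eval :=
    divDiff_congr fun i hi => by
      simp only [P, eval_mul, eval_sub, eval_pow, eval_X, Lagrange.eval_nodal_at_node hi, sub_zero]
      ring
  rw [hPv, divDiff_eval_of_natDegree_le_succ hvs hs hP]
  simp only [P, mul_sub, coeff_sub, coeff_X_mul_nodal_of_card_eq hs, ← pow_succ', coeff_X_pow,
    coeff_X_mul, coeff_nodal_of_card_eq hs, if_neg (by omega : n ≠ n + 1 + 1),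
    if_neg (by omega : n + 1 ≠ n + 1 + 1)]
  ring

theorem divDiff_zpow_eq_divDiff_inv (hs : #s = n + 1) (hv : ∀ i ∈ s, v i ≠ 0) (k : ℤ) :
    divDiff s v (· ^ k) =
      (-1) ^ n * (∏ i ∈ s, v i)⁻¹ * divDiff s (fun i => (v i)⁻¹) (· ^ ((n : ℤ) - 1 - k)) := by
  rw [divDiff, divDiff, mul_sum]
  refine sum_congr rfl fun i hi => ?_
  have hvi := hv i hi
  have hprod : ∏ j ∈ s.erase i, (v i - v j) =
      (-1) ^ n * (∏ j ∈ s.erase i, ((v i)⁻¹ - (v j)⁻¹)) * (v i ^ n * ∏ j ∈ s.erase i, v j) := by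
    calc ∏ j ∈ s.erase i, (v i - v j)
        = ∏ j ∈ s.erase i, (-((v i)⁻¹ - (v j)⁻¹) * (v i * v j)) :=
          prod_congr rfl fun j hj => by
            field_simp [hvi, hv j (mem_of_mem_erase hj)]
            ring
      _ = _ := by
          rw [prod_mul_distrib, prod_mul_distrib, prod_neg, prod_const, card_erase_of_mem hi, hs,
            Nat.add_sub_cancel]
  rw [hprod, ← mul_prod_erase s v hi, inv_zpow', show -((n : ℤ) - 1 - k) = k + 1 - n by ring,
    zpow_sub₀ hvi, zpow_add_one₀ hvi, zpow_natCast]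
  generalize ∏ j ∈ s.erase i, ((v i)⁻¹ - (v j)⁻¹) = d
  rcases eq_or_ne d 0 with rfl | hd
  -- without injectivity `d` may vanish; both sides are then `0` by the convention `x / 0 = 0`
  · simp
  · field_simp
    rw [← pow_mul, pow_mul', neg_one_sq, one_pow]

theorem divDiff_zpow_neg_one (hvs : Set.InjOn v s) (hs : #s = n + 1) (hv : ∀ i ∈ s, v i ≠ 0) :
    divDiff s v (· ^ (-1 : ℤ)) = (-1) ^ n * (∏ i ∈ s, v i)⁻¹ := by
  rw [divDiff_zpow_eq_divDiff_inv hs hv, sub_neg_eq_add, sub_add_cancel]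
  simp only [zpow_natCast]
  rw [divDiff_pow_self (v := fun i => (v i)⁻¹) (inv_injective.comp_injOn hvs) hs, mul_one]

theorem divDiff_zpow_neg_two (hvs : Set.InjOn v s) (hs : #s = n + 1) (hv : ∀ i ∈ s, v i ≠ 0) :
    divDiff s v (· ^ (-2 : ℤ)) = (-1) ^ n * (∏ i ∈ s, v i)⁻¹ * ∑ i ∈ s, (v i)⁻¹ := by
  rw [divDiff_zpow_eq_divDiff_inv hs hv, show (n : ℤ) - 1 - -2 = (n + 1 : ℕ) by push_cast; ring]
  simp only [zpow_natCast]
  rw [divDiff_pow_succ (v := fun i => (v i)⁻¹) (inv_injective.comp_injOn hvs) hs]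

theorem sum_Icc_mul_divDiff_zpow (hvs : Set.InjOn v s) (hs : #s = n + 1)
    (hv : ∀ i ∈ s, v i ≠ 0) (a : ℤ → F) :
    ∑ t ∈ Icc (-2 : ℤ) (n + 2), a t * divDiff s v (· ^ t) =
      a (-2) * ((-1) ^ n * (∏ i ∈ s, v i)⁻¹ * ∑ i ∈ s, (v i)⁻¹) +
      a (-1) * ((-1) ^ n * (∏ i ∈ s, v i)⁻¹) + a n + a (n + 1) * ∑ i ∈ s, v i +
      a (n + 2) * ((∑ i ∈ s, v i) ^ 2 - ∑ t ∈ s.powersetCard 2, ∏ i ∈ t, v i) := by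
  set T : Finset ℤ := {-2, -1, (n : ℤ), (n : ℤ) + 1, (n : ℤ) + 2}
  have hsub : T ⊆ Icc (-2 : ℤ) (n + 2) := by
    intro t ht
    simp only [T, mem_insert, mem_singleton] at ht
    rw [mem_Icc]
    omega
  have hvanish : ∀ t ∈ Icc (-2 : ℤ) (n + 2), t ∉ T → a t * divDiff s v (· ^ t) = 0 := by
    intro t ht hnot
    simp only [T, mem_Icc, mem_insert, mem_singleton] at ht hnot
    lift t to ℕ using by omega
    simp only [zpow_natCast]
    rw [divDiff_pow_of_lt hvs hs (by omega), mul_zero]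
  rw [← sum_subset hsub hvanish]
  simp only [T]
  repeat rw [sum_insert (by simp only [mem_insert, mem_singleton]; omega)]
  rw [sum_singleton,
    divDiff_zpow_neg_two hvs hs hv, divDiff_zpow_neg_one hvs hs hv,
    show (n : ℤ) + 1 = (n + 1 : ℕ) by push_cast; ring,
    show (n : ℤ) + 2 = (n + 2 : ℕ) by push_cast; ring]
  simp only [zpow_natCast]
  rw [divDiff_pow_self hvs hs, divDiff_pow_succ hvs hs, divDiff_pow_add_two hvs hs]
  push_cast
  ring

end DividedDifference

theorem pow_mul_laurentP_add_neg (c : ℤ → ℂ) (n r : ℕ) {γ : ℂ} (hγ : γ ≠ 0) :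
    γ ^ n * (LaurentP c (n + 2 * r) γ + (-1) ^ n * LaurentP c (n + 2 * r) (-γ)) =
      2 * ∑ t ∈ Icc (-(r : ℤ)) (n + r), c (2 * t - n) * (γ ^ 2) ^ t := by
  have hterm : ∀ m : ℤ, γ ^ n * (c m * γ ^ m + (-1) ^ n * (c m * (-γ) ^ m)) =
      c m * γ ^ ((n : ℤ) + m) * (1 + (-1) ^ ((n : ℤ) + m)) := by
    intro m
    rw [neg_eq_neg_one_mul γ, mul_zpow, zpow_add₀ hγ, zpow_add₀ (neg_ne_zero.2 one_ne_zero),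
      zpow_natCast, zpow_natCast]
    ring
  have hodd : ∀ m ∈ Icc (-((n + 2 * r : ℕ) : ℤ)) ((n + 2 * r : ℕ) : ℤ),
      m ∉ (Icc (-(r : ℤ)) (n + r)).image (fun t : ℤ => 2 * t - n) →
      γ ^ n * (c m * γ ^ m + (-1) ^ n * (c m * (-γ) ^ m)) = 0 := by
    intro m hm hnot
    have : Odd ((n : ℤ) + m) := by
      refine Int.not_even_iff_odd.1 fun ⟨t, ht⟩ => hnot (mem_image.2 ⟨t, ?_, by omega⟩)
      simp only [mem_Icc] at hm ⊢
      omega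
    rw [hterm, this.neg_one_zpow, add_neg_cancel, mul_zero]
  have hsub : (Icc (-(r : ℤ)) (n + r)).image (fun t : ℤ => 2 * t - n) ⊆
      Icc (-((n + 2 * r : ℕ) : ℤ)) ((n + 2 * r : ℕ) : ℤ) := by
    intro m hm
    obtain ⟨t, ht, rfl⟩ := mem_image.1 hm
    simp only [mem_Icc] at ht ⊢
    omega
  rw [LaurentP, LaurentP, mul_sum, mul_sum, ← sum_add_distrib, mul_sum, ← sum_subset hsub hodd,
    sum_image fun a _ b _ h => by simpa using h]
  refine sum_congr rfl fun t _ => ?_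
  rw [hterm, show (n : ℤ) + (2 * t - n) = 2 * t by ring, (even_two_mul t).neg_one_zpow, zpow_mul,
    zpow_ofNat]
  ring

theorem residue_sum_identity_deg4 (n : ℕ) (γ : Fin (n + 1) → ℂ)
    (hγ0 : ∀ k, γ k ≠ 0)
    (hγ : ∀ j k, j ≠ k → γ j ^ 2 ≠ γ k ^ 2)
    (c : ℤ → ℂ) :
    c (n : ℤ) + c ((n : ℤ) + 2) * ∑ k, γ k ^ 2 +
        c ((n : ℤ) + 4) * ((∑ k, γ k ^ 4) +
          ∑ p ∈ univ.filter (fun p : Fin (n + 1) × Fin (n + 1) => p.1 < p.2),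
            γ p.1 ^ 2 * γ p.2 ^ 2)
      = (c (-(n : ℤ) - 2) + c (-(n : ℤ) - 4) * ∑ j, γ j ^ (-2 : ℤ)) *
          (-1) ^ (n + 1) / ∏ k, γ k ^ 2 +
        (1 / 2) * ∑ k, γ k ^ n *
          (LaurentP c (n + 4) (γ k) + (-1) ^ n * LaurentP c (n + 4) (-γ k)) /
          ∏ j ∈ univ.erase k, (γ k ^ 2 - γ j ^ 2) := by
  set x : Fin (n + 1) → ℂ := fun k => γ k ^ 2 with hx_def
  have hx : Set.InjOn x (univ : Finset (Fin (n + 1))) := fun j _ k _ h =>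
    by_contra fun hjk => hγ j k hjk h
  have hx0 : ∀ k ∈ univ, x k ≠ 0 := fun k _ => pow_ne_zero 2 (hγ0 k)
  have hres : (1 / 2) * ∑ k, γ k ^ n *
        (LaurentP c (n + 4) (γ k) + (-1) ^ n * LaurentP c (n + 4) (-γ k)) /
        ∏ j ∈ univ.erase k, (x k - x j) =
      ∑ t ∈ Icc (-2 : ℤ) (n + 2), c (2 * t - n) * divDiff univ x (· ^ t) := by
    rw [← divDiff_sum_mul, divDiff, mul_sum]
    refine sum_congr rfl fun k _ => ?_
    rw [pow_mul_laurentP_add_neg c n 2 (hγ0 k), Nat.cast_ofNat, hx_def]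
    ring
  have hpairs : univ.offDiag.filter (fun p : Fin (n + 1) × Fin (n + 1) => p.1 < p.2) =
      univ.filter (fun p => p.1 < p.2) := by
    ext p
    simpa using fun h => h.ne
  have hfourth : ∑ k, γ k ^ 4 = ∑ k, x k ^ 2 := sum_congr rfl fun k _ => by rw [hx_def, ← pow_mul]
  have hinv : ∑ j, γ j ^ (-2 : ℤ) = ∑ j, (x j)⁻¹ :=
    sum_congr rfl fun j _ => by rw [zpow_neg, zpow_ofNat]
  rw [hres, sum_Icc_mul_divDiff_zpow hx (by simp) hx0, sq_sum_sub_sum_powersetCard_two, hpairs,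
    hfourth, hinv, show 2 * (-2) - (n : ℤ) = -n - 4 by ring,
    show 2 * (-1) - (n : ℤ) = -n - 2 by ring, show 2 * (n : ℤ) - n = n by ring,
    show 2 * ((n : ℤ) + 1) - n = n + 2 by ring, show 2 * ((n : ℤ) + 2) - n = n + 4 by ring]
  ring
end

section
/- Let b_0,…,b_n be real numbers distinct mod π, m, a real with m an integer, and ϑ ∈ {m−n, m−n+2, …, m+n} (same parity as m+n). Then for all z with sin(z−b_k) ≠ 0: sin(mz−a)/∏_{k=0}^n sin(z−b_k) = Σ_{k=0}^n sin(m b_k − a + ϑ(z−b_k)) / [ ∏_{j≠k} sin(b_k−b_j) · sin(z−b_k) ]. -/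
/-!
With `u = exp (z i)` and nodes `β k = exp (2 b k i)`, each factor `sin (z - b j) / sin (b k - b j)`
equals `(exp (b k i) / u) * (u² - β j) / (β k - β j)`, so the trigonometric Lagrange basis
`L k z = ∏_{j ≠ k} sin (z - b j) / sin (b k - b j)` is `(exp (b k i) / u) ^ n` times the
ordinary Lagrange basis at the nodes `β` evaluated at `u²`. Interpolating `X ^ p` for `p ≤ n`
therefore gives `∑ k, exp (s b k i) L k z = exp (s z i)` for every `s = p - q` with
`p + q = n`. Since `m b k - a + ϑ (z - b k) = (ϑ z - a) + (m - ϑ) b k` and the hypotheses on `ϑ`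
say exactly that `m - ϑ` is such an `s`, expanding `sin` into exponentials yields
`sin (m z - a) = ∑ k, sin (m b k - a + ϑ (z - b k)) L k z`; dividing by `∏ sin (z - b k)`
gives the partial fraction expansion.
-/

open Finset

theorem Lagrange.sum_pow_mul_prod_sub_div_sub {F ι : Type*} [Field F] [Fintype ι]
    [DecidableEq ι] {β : ι → F} (hβ : Function.Injective β) {r : ℕ} (hr : r < Fintype.card ι)
    (w : F) :
    ∑ k, β k ^ r * ∏ j ∈ univ.erase k, (w - β j) / (β k - β j) = w ^ r := by
  have hdeg : ((Polynomial.X : Polynomial F) ^ r).degree < #(univ : Finset ι) := by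
    rw [Polynomial.degree_X_pow, card_univ]
    exact_mod_cast hr
  have h := congrArg (Polynomial.eval w) (Lagrange.eq_interpolate hβ.injOn hdeg)
  simp only [Lagrange.interpolate_apply, Lagrange.basis, Lagrange.basisDivisor,
    Polynomial.eval_prod, Polynomial.eval_finsetSum, Polynomial.eval_mul, Polynomial.eval_C,
    Polynomial.eval_pow, Polynomial.eval_X, Polynomial.eval_sub] at h
  rw [h]
  simp only [div_eq_inv_mul]

namespace Complex

theorem sin_sub_eq_exp (x y : ℂ) :
    sin (x - y) = (exp (x * I) ^ 2 - exp (y * I) ^ 2) / (2 * I * exp (x * I) * exp (y * I)) := by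
  have hx := exp_ne_zero (x * I)
  have hy := exp_ne_zero (y * I)
  rw [sin, show -(x - y) * I = y * I - x * I by ring,
    show (x - y) * I = x * I - y * I by ring, exp_sub, exp_sub]
  field_simp
  ring_nf
  rw [I_sq]
  ring

theorem sin_sub_div_sin_sub (x y z : ℂ) :
    sin (z - y) / sin (x - y) =
      exp (x * I) / exp (z * I) *
        ((exp (z * I) ^ 2 - exp (y * I) ^ 2) / (exp (x * I) ^ 2 - exp (y * I) ^ 2)) := by
  have hx := exp_ne_zero (x * I)
  have hy := exp_ne_zero (y * I)
  have hz := exp_ne_zero (z * I)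
  rw [sin_sub_eq_exp, sin_sub_eq_exp, div_div_div_comm]
  field_simp

end Complex

section SinLagrange

open Complex

variable {ι : Type*} {b : ι → ℂ}

theorem injective_exp_sq_of_pairwise (hb : Pairwise fun j k ↦ sin (b j - b k) ≠ 0) :
    Function.Injective fun k ↦ exp (b k * I) ^ 2 := by
  intro j k hjk
  by_contra hne
  apply hb hne
  rw [sin_sub_eq_exp, show exp (b j * I) ^ 2 = exp (b k * I) ^ 2 from hjk, sub_self, zero_div]

variable [Fintype ι] [DecidableEq ι]

noncomputable def sinLagrangeBasis (b : ι → ℂ) (k : ι) (z : ℂ) : ℂ :=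
  ∏ j ∈ univ.erase k, sin (z - b j) / sin (b k - b j)

theorem sinLagrangeBasis_eq (k : ι) (z : ℂ) :
    sinLagrangeBasis b k z = (exp (b k * I) / exp (z * I)) ^ (Fintype.card ι - 1) *
      ∏ j ∈ univ.erase k,
        (exp (z * I) ^ 2 - exp (b j * I) ^ 2) / (exp (b k * I) ^ 2 - exp (b j * I) ^ 2) := by
  simp only [sinLagrangeBasis, sin_sub_div_sin_sub, prod_mul_distrib, prod_const,
    card_erase_of_mem (mem_univ k), card_univ]

theorem sum_exp_mul_sinLagrangeBasis (hb : Pairwise fun j k ↦ sin (b j - b k) ≠ 0) {p q : ℕ}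
    (hpq : p + q + 1 = Fintype.card ι) (z : ℂ) :
    ∑ k, exp ((p - q) * b k * I) * sinLagrangeBasis b k z = exp ((p - q) * z * I) := by
  have exp_eq : ∀ x : ℂ, exp ((p - q) * x * I) = exp (x * I) ^ p / exp (x * I) ^ q := fun x ↦ by
    rw [show (p - q) * x * I = p * (x * I) - q * (x * I) by ring, exp_sub, exp_nat_mul,
      exp_nat_mul]
  have hu := exp_ne_zero (z * I)
  have term : ∀ k, exp ((p - q) * b k * I) * sinLagrangeBasis b k z =
      ((exp (b k * I) ^ 2) ^ p * ∏ j ∈ univ.erase k,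
        (exp (z * I) ^ 2 - exp (b j * I) ^ 2) / (exp (b k * I) ^ 2 - exp (b j * I) ^ 2)) /
        exp (z * I) ^ (p + q) := fun k ↦ by
    have hc := exp_ne_zero (b k * I)
    rw [exp_eq, sinLagrangeBasis_eq, ← hpq, Nat.add_sub_cancel]
    generalize (∏ j ∈ univ.erase k, _ : ℂ) = P
    generalize exp (b k * I) = c at hc ⊢
    generalize exp (z * I) = u at hu ⊢
    rw [div_pow, pow_add, pow_add, ← pow_mul]
    field_simp
    ring
  simp only [term, ← sum_div]
  rw [Lagrange.sum_pow_mul_prod_sub_div_sub (injective_exp_sq_of_pairwise hb) (by omega), exp_eq]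
  field_simp
  ring

theorem sum_sin_mul_sinLagrangeBasis (hb : Pairwise fun j k ↦ sin (b j - b k) ≠ 0) {p q : ℕ}
    (hpq : p + q + 1 = Fintype.card ι) (c z : ℂ) :
    ∑ k, sin (c + (p - q) * b k) * sinLagrangeBasis b k z = sin (c + (p - q) * z) := by
  have expand : ∀ x, sin (c + (p - q) * x) =
      (exp (-c * I) * exp ((q - p) * x * I) - exp (c * I) * exp ((p - q) * x * I)) * I / 2 :=
    fun x ↦ by rw [sin, ← exp_add, ← exp_add]; ring_nf
  calc ∑ k, sin (c + (p - q) * b k) * sinLagrangeBasis b k z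
      = (exp (-c * I) * ∑ k, exp ((q - p) * b k * I) * sinLagrangeBasis b k z -
          exp (c * I) * ∑ k, exp ((p - q) * b k * I) * sinLagrangeBasis b k z) * I / 2 := by
        rw [mul_sum, mul_sum, ← sum_sub_distrib, sum_mul, sum_div]
        refine sum_congr rfl fun k _ ↦ ?_
        rw [expand]
        ring
    _ = sin (c + (p - q) * z) := by
        rw [sum_exp_mul_sinLagrangeBasis hb hpq, sum_exp_mul_sinLagrangeBasis hb (by omega),
          expand]

theorem sinLagrangeBasis_div_prod {k : ι} {z : ℂ} (hz : ∀ j ≠ k, sin (z - b j) ≠ 0) :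
    sinLagrangeBasis b k z / ∏ j, sin (z - b j) =
      ((∏ j ∈ univ.erase k, sin (b k - b j)) * sin (z - b k))⁻¹ := by
  have hP : ∏ j ∈ univ.erase k, sin (z - b j) ≠ 0 :=
    prod_ne_zero_iff.mpr fun j hj ↦ hz j (ne_of_mem_erase hj)
  rw [sinLagrangeBasis, prod_div_distrib, ← mul_prod_erase univ _ (mem_univ k)]
  field_simp

end SinLagrange

theorem sin_over_sine_expansion (n : ℕ) (b : Fin (n + 1) → ℝ)
    (hb : ∀ j k, j ≠ k → Real.sin (b j - b k) ≠ 0)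
    (m : ℕ) (a : ℝ) (ϑ : ℤ)
    (hϑl : (m : ℤ) - n ≤ ϑ) (hϑu : ϑ ≤ (m : ℤ) + n)
    (hpar : ϑ % 2 = ((m : ℤ) + n) % 2)
    (z : ℂ) (hz : ∀ k, Complex.sin (z - (b k : ℂ)) ≠ 0) :
    Complex.sin ((m : ℂ) * z - (a : ℂ)) / ∏ k, Complex.sin (z - (b k : ℂ))
      = ∑ k, Complex.sin ((m : ℂ) * (b k : ℂ) - (a : ℂ) + (ϑ : ℂ) * (z - (b k : ℂ))) /
          ((∏ j ∈ univ.erase k, Complex.sin ((b k : ℂ) - (b j : ℂ))) *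
            Complex.sin (z - (b k : ℂ))) := by
  obtain ⟨p, q, hpq, hsub⟩ : ∃ p q : ℕ, p + q + 1 = Fintype.card (Fin (n + 1)) ∧
      (p : ℤ) - q = m - ϑ :=
    ⟨((n + m - ϑ) / 2).toNat, ((n - m + ϑ) / 2).toNat, by simp only [Fintype.card_fin]; omega,
      by omega⟩
  have hb' : Pairwise fun j k ↦ Complex.sin ((b j : ℂ) - b k) ≠ 0 := fun j k hjk ↦ by
    dsimp only
    rw [← Complex.ofReal_sub, ← Complex.ofReal_sin]
    exact_mod_cast hb j k hjk
  have hs : (p : ℂ) - q = m - ϑ := by exact_mod_cast hsub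
  have arg : ∀ x : ℂ, ϑ * z - a + (p - q) * x = m * x - a + ϑ * (z - x) := fun x ↦ by
    rw [hs]; ring
  rw [show (m : ℂ) * z - a = ϑ * z - a + (p - q) * z by rw [hs]; ring,
    ← sum_sin_mul_sinLagrangeBasis hb' hpq, sum_div]
  refine sum_congr rfl fun k _ ↦ ?_
  rw [mul_div_assoc, sinLagrangeBasis_div_prod fun j _ ↦ hz j, arg, div_eq_mul_inv]
end
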